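/- arXiv:2512.20826 — 9 statements merged into one kernel-verified Lean document; each statement's English description precedes it below -/
import Mathlib

section
/- Let F be a real vector space, let λ₁,…,λ_m be linear functionals on F with observation map Λ(f) = (λ₁(f),…,λ_m(f)), and let K ⊆ F be a convex set containing 0. Let I be a nonempty index set and let γ_i (i ∈ I) be linear functionals on F such that γ(f) := sup_{i∈I} γ_i(f) is finite for every f ∈ F. Assume the intrinsic lower bound e_♭ := sup{ (γ(f′) − γ(f″))/2 : f′, f″ ∈ K, Λ(f′) = Λ(f″) } is finite. Then there exist real coefficients c₀^{(i)} and vectors c^{(i)} ∈ ℝ^m (i ∈ I) such that the sup-affine functional δ : ℝ^m → ℝ defined by δ(y) = sup_{i∈I} ( c₀^{(i)} + Σ_{k=1}^m c_k^{(i)} y_k ) satisfies |γ(f) − δ(Λ(f))| ≤ e_♭ for all f ∈ K; in particular δ is an optimal estimation functional, i.e. sup_{f∈K} |γ(f) − δ(Λ(f))| ≤ sup_{f∈K} |γ(f) − δ′(Λ(f))| for every map δ′ : ℝ^m → ℝ. -/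
/-!
Since `γ` is a supremum of the linear functionals `γᵢ`, it suffices to sandwich each `γᵢ` by an
affine function of the observations: `γᵢ f - e♭ ≤ aᵢ + ℓᵢ (Λ f) ≤ γ f + e♭` on `K`; the supremum
`δ` of these affine functions then has error at most `e♭`. Such `ℓᵢ` exists as soon as
`ℓᵢ (Λ f'' - Λ f') ≤ γ f'' - γᵢ f' + 2 e♭` for all `f', f'' ∈ K`, and this is a Hahn–Banach
problem: the right-hand side is a convex function of `(f', f'')` on `K × K`, it is nonnegative
when `Λ f' = Λ f''` by definition of `e♭`, and swapping `f'` and `f''` negates `Λ f'' - Λ f'`.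
The last two facts make the cone over the epigraph of the problem admit a non-vertical supporting
hyperplane (M. Riesz extension theorem), which is the required `ℓᵢ`.
-/

open Set

theorem PointedCone.eq_zero_or_mem_convexConeHull {𝕜 E : Type*} [Semiring 𝕜] [PartialOrder 𝕜]
    [IsOrderedRing 𝕜] [AddCommMonoid E] [Module 𝕜 E] {s : Set E} {x : E}
    (hx : x ∈ PointedCone.hull 𝕜 s) : x = 0 ∨ x ∈ ConvexCone.hull 𝕜 s := by
  induction hx using Submodule.span_induction with
  | mem x hx => exact .inr (ConvexCone.subset_hull hx)
  | zero => exact .inl rfl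
  | add x y _ _ hx hy =>
    rcases hx with rfl | hx
    · rwa [zero_add]
    rcases hy with rfl | hy
    · rw [add_zero]; exact .inr hx
    exact .inr (add_mem hx hy)
  | smul c x _ hx =>
    rcases eq_or_lt_of_le c.2 with hc | hc
    · rw [show c = 0 from Subtype.ext hc.symm, zero_smul]; exact .inl rfl
    rcases hx with rfl | hx
    · rw [smul_zero]; exact .inl rfl
    exact .inr ((ConvexCone.hull 𝕜 s).smul_mem hc hx)

section

variable {F G : Type*} [AddCommGroup F] [Module ℝ F] [AddCommGroup G] [Module ℝ G]

theorem Convex.exists_linearMap_fst_le_snd {P : Set (G × ℝ)} (hP : Convex ℝ P)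
    (hsymm : ∀ p ∈ P, ∃ q ∈ P, q.1 = -p.1) (hnonneg : ∀ p ∈ P, p.1 = 0 → 0 ≤ p.2) :
    ∃ ℓ : G →ₗ[ℝ] ℝ, ∀ p ∈ P, ℓ p.1 ≤ p.2 := by
  set C := PointedCone.hull ℝ P
  -- By the symmetry of `P`, this lineality space is the span of the first coordinates of `P`.
  set V := (C.map (LinearMap.fst ℝ G ℝ)).lineal
  have hCV : ∀ x ∈ C, x.1 ∈ V := by
    intro x hx
    refine (Submodule.span_le (p := (V : PointedCone ℝ G).comap (LinearMap.fst ℝ G ℝ))).2 ?_ hx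
    intro p hp
    obtain ⟨q, hq, hqp⟩ := hsymm p hp
    exact ⟨PointedCone.mem_map.2 ⟨p, PointedCone.subset_hull hp, rfl⟩,
      PointedCone.mem_map.2 ⟨q, PointedCone.subset_hull hq, hqp⟩⟩
  obtain ⟨W, hVW⟩ := V.exists_isCompl
  let f : G × ℝ →ₗ.[ℝ] ℝ := ⟨W.prod ⊤, (LinearMap.snd ℝ G ℝ).comp (W.prod ⊤).subtype⟩
  have hf_nonneg : ∀ x : f.domain, (x : G × ℝ) ∈ C → 0 ≤ f x := by
    rintro ⟨⟨w, r⟩, hwr⟩ hx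
    change 0 ≤ r
    have hw0 : w = 0 := Submodule.disjoint_def.1 hVW.disjoint w (hCV _ hx) hwr.1
    rcases PointedCone.eq_zero_or_mem_convexConeHull hx with h | h
    · exact (congrArg Prod.snd h).ge
    obtain ⟨t, ht, p, hp, hpx⟩ := (ConvexCone.mem_hull_of_convex hP).1 h
    have hpw : t • p.1 = w := congrArg Prod.fst hpx
    have hpr : t * p.2 = r := congrArg Prod.snd hpx
    rw [hw0, smul_eq_zero] at hpw
    exact hpr ▸ mul_nonneg ht.le (hnonneg p hp (hpw.resolve_left ht.ne'))
  have hf_dense : ∀ y, ∃ x : f.domain, (x : G × ℝ) + y ∈ C := by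
    rintro ⟨v, r⟩
    obtain ⟨a, ha, b, hb, rfl⟩ :=
      Submodule.mem_sup.1 (hVW.sup_eq_top ▸ Submodule.mem_top (x := v))
    obtain ⟨x, hx, hxa⟩ := PointedCone.mem_map.1 (PointedCone.mem_lineal.1 ha).1
    refine ⟨⟨(-b, x.2 - r), Submodule.mem_prod.2 ⟨neg_mem hb, trivial⟩⟩, ?_⟩
    convert hx using 1
    ext <;> simp [← hxa]
  -- M. Riesz: extend `(w, r) ↦ r` from `W × ℝ` to a functional that is nonnegative on `C`.
  obtain ⟨g, hgf, hg⟩ := riesz_extension C f hf_nonneg hf_dense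
  refine ⟨-g.comp (LinearMap.inl ℝ G ℝ), fun p hp => ?_⟩
  have h01 : g (0, 1) = 1 := hgf ⟨(0, 1), Submodule.mem_prod.2 ⟨W.zero_mem, trivial⟩⟩
  have hsplit : p = LinearMap.inl ℝ G ℝ p.1 + p.2 • (0, 1) := by ext <;> simp
  have := hg p (PointedCone.subset_hull hp)
  rw [hsplit, map_add, map_smul, h01] at this
  simp only [LinearMap.neg_apply, LinearMap.comp_apply, smul_eq_mul, mul_one] at this ⊢
  linarith

theorem ConvexOn.exists_linearMap_comp_le {C : Set F} {h : F → ℝ} (hh : ConvexOn ℝ C h)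
    (A : F →ₗ[ℝ] G) (hsymm : ∀ x ∈ C, ∃ x' ∈ C, A x' = -A x)
    (hnonneg : ∀ x ∈ C, A x = 0 → 0 ≤ h x) :
    ∃ ℓ : G →ₗ[ℝ] ℝ, ∀ x ∈ C, ℓ (A x) ≤ h x := by
  set P := A.prodMap LinearMap.id '' {q : F × ℝ | q.1 ∈ C ∧ h q.1 ≤ q.2}
  have hPsymm : ∀ p ∈ P, ∃ q ∈ P, q.1 = -p.1 := by
    rintro _ ⟨⟨x, r⟩, ⟨hx, -⟩, rfl⟩
    obtain ⟨x', hx', hAx'⟩ := hsymm x hx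
    exact ⟨_, ⟨(x', h x'), ⟨hx', le_rfl⟩, rfl⟩, hAx'⟩
  have hPnonneg : ∀ p ∈ P, p.1 = 0 → 0 ≤ p.2 := by
    rintro _ ⟨⟨x, r⟩, ⟨hx, hr⟩, rfl⟩ hAx
    exact (hnonneg x hx hAx).trans hr
  obtain ⟨ℓ, hℓ⟩ := (hh.convex_epigraph.linear_image _).exists_linearMap_fst_le_snd hPsymm hPnonneg
  exact ⟨ℓ, fun x hx => hℓ _ ⟨(x, h x), ⟨hx, le_rfl⟩, rfl⟩⟩

theorem exists_linearMap_map_sub_le (Λ : F →ₗ[ℝ] G) {K : Set F} {γ g : F → ℝ}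
    (hγ : ConvexOn ℝ K γ) (hg : ConcaveOn ℝ K g) (hgγ : ∀ f ∈ K, g f ≤ γ f) {c : ℝ}
    (hc : ∀ f' ∈ K, ∀ f'' ∈ K, Λ f' = Λ f'' → γ f' - γ f'' ≤ c) :
    ∃ ℓ : G →ₗ[ℝ] ℝ, ∀ f' ∈ K, ∀ f'' ∈ K, ℓ (Λ f'' - Λ f') ≤ γ f'' - g f' + c := by
  have hKK : Convex ℝ (K ×ˢ K) := hγ.1.prod hγ.1
  have hcost : ConvexOn ℝ (K ×ˢ K) fun x : F × F => γ x.2 - g x.1 + c :=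
    (((hγ.comp_linearMap (LinearMap.snd ℝ F F)).subset (fun x hx => hx.2) hKK).sub
      ((hg.comp_linearMap (LinearMap.fst ℝ F F)).subset (fun x hx => hx.1) hKK)).add_const c
  obtain ⟨ℓ, hℓ⟩ := hcost.exists_linearMap_comp_le
    (Λ ∘ₗ (LinearMap.snd ℝ F F - LinearMap.fst ℝ F F))
    (fun x hx => ⟨x.swap, ⟨hx.2, hx.1⟩, by simp⟩)
    (fun x hx hΛ => by
      have := hc x.1 hx.1 x.2 hx.2 (sub_eq_zero.1 (by simpa using hΛ)).symm
      linarith [hgγ x.1 hx.1])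
  exact ⟨ℓ, fun f' hf' f'' hf'' => by simpa using hℓ (f', f'') ⟨hf', hf''⟩⟩

theorem exists_affine_between (Λ : F →ₗ[ℝ] G) {K : Set F} (hK : K.Nonempty) {γ g : F → ℝ}
    (hγ : ConvexOn ℝ K γ) (hg : ConcaveOn ℝ K g) (hgγ : ∀ f ∈ K, g f ≤ γ f) {e : ℝ}
    (he : ∀ f' ∈ K, ∀ f'' ∈ K, Λ f' = Λ f'' → γ f' - γ f'' ≤ 2 * e) :
    ∃ (a : ℝ) (ℓ : G →ₗ[ℝ] ℝ), ∀ f ∈ K, g f - e ≤ a + ℓ (Λ f) ∧ a + ℓ (Λ f) ≤ γ f + e := by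
  obtain ⟨ℓ, hℓ⟩ := exists_linearMap_map_sub_le Λ hγ hg hgγ he
  have hsep : ∀ f' ∈ K, ∀ f'' ∈ K, g f' - ℓ (Λ f') ≤ γ f'' - ℓ (Λ f'') + 2 * e := by
    intro f' hf' f'' hf''
    have := hℓ f' hf' f'' hf''
    rw [map_sub] at this
    linarith
  set S := (fun f => g f - ℓ (Λ f)) '' K
  obtain ⟨f₀, hf₀⟩ := hK
  have hS : BddAbove S := ⟨_, forall_mem_image.2 fun f hf => hsep f hf f₀ hf₀⟩
  refine ⟨sSup S - e, ℓ, fun f hf => ⟨?_, ?_⟩⟩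
  · linarith [le_csSup hS (mem_image_of_mem _ hf)]
  · linarith [csSup_le ⟨_, mem_image_of_mem _ hf₀⟩
      (forall_mem_image.2 fun f' hf' => hsep f' hf' f hf)]

theorem convexOn_of_isLUB_range {ι : Type*} {γi : ι → F →ₗ[ℝ] ℝ} {γ : F → ℝ}
    (hγ : ∀ f, IsLUB (range fun i => γi i f) (γ f)) :
    ConvexOn ℝ univ γ := by
  refine ⟨convex_univ, fun f _ g _ a b ha hb _ => (hγ _).2 ?_⟩
  rintro _ ⟨i, rfl⟩
  have hf := (hγ f).1 ⟨i, rfl⟩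
  have hg := (hγ g).1 ⟨i, rfl⟩
  simp only [map_add, map_smul, smul_eq_mul]
  linarith [mul_le_mul_of_nonneg_left hf ha, mul_le_mul_of_nonneg_left hg hb]

end

theorem abs_sub_ciSup_le_of_isLUB {ι : Type*} [Nonempty ι] {v u : ι → ℝ} {x e : ℝ}
    (hx : IsLUB (range v) x) (hvu : ∀ i, v i - e ≤ u i) (hux : ∀ i, u i ≤ x + e) :
    |x - ⨆ i, u i| ≤ e := by
  have hu : BddAbove (range u) := ⟨x + e, forall_mem_range.2 hux⟩
  have hsup_le : ⨆ i, u i ≤ x + e := ciSup_le hux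
  have hle_sup : x ≤ (⨆ i, u i) + e :=
    hx.2 <| forall_mem_range.2 fun i => by linarith [hvu i, le_ciSup hu i]
  rw [abs_le]
  constructor <;> linarith

noncomputable def worstCaseError {F Y : Type*} (K : Set F) (γ : F → ℝ) (obs : F → Y)
    (δ : Y → ℝ) : ENNReal :=
  ⨆ f ∈ K, ENNReal.ofReal |γ f - δ (obs f)|

section

variable {F Y : Type*} {K : Set F} {γ : F → ℝ} {obs : F → Y} {e : ℝ}

theorem worstCaseError_le_ofReal {δ : Y → ℝ} (h : ∀ f ∈ K, |γ f - δ (obs f)| ≤ e) :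
    worstCaseError K γ obs δ ≤ ENNReal.ofReal e :=
  iSup₂_le fun f hf => ENNReal.ofReal_le_ofReal (h f hf)

theorem ofReal_le_worstCaseError
    (he : IsLUB {x | ∃ f' ∈ K, ∃ f'' ∈ K, obs f' = obs f'' ∧ x = (γ f' - γ f'') / 2} e)
    (δ : Y → ℝ) : ENNReal.ofReal e ≤ worstCaseError K γ obs δ := by
  set B := worstCaseError K γ obs δ
  by_cases hB : B = ⊤
  · exact hB ▸ le_top
  rw [ENNReal.ofReal_le_iff_le_toReal hB]
  refine he.2 ?_
  rintro _ ⟨f', hf', f'', hf'', hobs, rfl⟩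
  have hB' : ∀ f ∈ K, |γ f - δ (obs f)| ≤ B.toReal := fun f hf =>
    (ENNReal.ofReal_le_iff_le_toReal hB).1 (le_iSup₂_of_le f hf le_rfl)
  have h' := hB' f' hf'
  have h'' := hB' f'' hf''
  rw [hobs] at h'
  linarith [le_abs_self (γ f' - δ (obs f'')), neg_abs_le (γ f'' - δ (obs f''))]

end

theorem LinearMap.sum_apply_single_one_mul {R ι : Type*} [CommSemiring R] [Fintype ι]
    [DecidableEq ι] (ℓ : (ι → R) →ₗ[R] R) (y : ι → R) :
    ∑ k, ℓ (Pi.single k 1) * y k = ℓ y := by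
  have := LinearMap.congr_fun ((LinearEquiv.piRing R R ι R).symm_apply_apply ℓ) y
  rw [LinearEquiv.piRing_symm_apply] at this
  simpa [mul_comm] using this

/-- **Optimal estimation of a sup-linear functional (Theorem 4/Thm4Max).**
If `K` is convex containing `0`, the `γ i` are linear functionals whose pointwise
supremum `γ` is finite everywhere, and the intrinsic lower bound `eflat` is finite,
then there is a sup-affine functional `δ` of the observations whose worst-case error
over `K` is at most `eflat`; in particular `δ` is an optimal estimation functional. -/
theorem stmt_0 {F : Type*} [AddCommGroup F] [Module ℝ F] {m : ℕ}
    (lam : Fin m → F →ₗ[ℝ] ℝ)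
    (K : Set F) (hK : Convex ℝ K) (h0K : (0 : F) ∈ K)
    {I : Type*} [Nonempty I] (γi : I → F →ₗ[ℝ] ℝ)
    (γ : F → ℝ) (hγ : ∀ f, IsLUB (Set.range fun i => γi i f) (γ f))
    (eflat : ℝ)
    (heflat : IsLUB {x : ℝ | ∃ f' ∈ K, ∃ f'' ∈ K,
        (∀ k, lam k f' = lam k f'') ∧ x = (γ f' - γ f'') / 2} eflat) :
    ∃ (c0 : I → ℝ) (c : I → Fin m → ℝ) (δ : (Fin m → ℝ) → ℝ),
      (∀ y : Fin m → ℝ,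
          BddAbove (Set.range fun i => c0 i + ∑ k, c i k * y k) →
          IsLUB (Set.range fun i => c0 i + ∑ k, c i k * y k) (δ y)) ∧
      (∀ f ∈ K, BddAbove (Set.range fun i => c0 i + ∑ k, c i k * lam k f)) ∧
      (∀ f ∈ K, |γ f - δ (fun k => lam k f)| ≤ eflat) ∧
      (∀ δ' : (Fin m → ℝ) → ℝ,
        (⨆ f ∈ K, ENNReal.ofReal |γ f - δ (fun k => lam k f)|) ≤
          ⨆ f ∈ K, ENNReal.ofReal |γ f - δ' (fun k => lam k f)|) := by
  set Λ := LinearMap.pi lam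
  simp_rw [← funext_iff] at heflat
  have hgap : ∀ f' ∈ K, ∀ f'' ∈ K, Λ f' = Λ f'' → γ f' - γ f'' ≤ 2 * eflat :=
    fun f' hf' f'' hf'' h => by linarith [heflat.1 ⟨f', hf', f'', hf'', h, rfl⟩]
  choose a ℓ hℓ using fun i => exists_affine_between Λ ⟨0, h0K⟩
    ((convexOn_of_isLUB_range hγ).subset (subset_univ K) hK) ((γi i).concaveOn hK)
    (fun f _ => (hγ f).1 ⟨i, rfl⟩) hgap
  set δ : (Fin m → ℝ) → ℝ := fun y => ⨆ i, a i + ∑ k, ℓ i (Pi.single k 1) * y k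
  have herr : ∀ f ∈ K, |γ f - δ (Λ f)| ≤ eflat := fun f hf => by
    simp only [δ, LinearMap.sum_apply_single_one_mul]
    exact abs_sub_ciSup_le_of_isLUB (hγ f) (fun i => (hℓ i f hf).1) (fun i => (hℓ i f hf).2)
  refine ⟨a, fun i k => ℓ i (Pi.single k 1), δ, fun y hy => isLUB_ciSup hy,
    fun f hf => ⟨γ f + eflat, forall_mem_range.2 fun i => ?_⟩, herr, fun δ' =>
    (worstCaseError_le_ofReal herr).trans (ofReal_le_worstCaseError heflat δ')⟩
  simp only [LinearMap.sum_apply_single_one_mul]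
  exact (hℓ i f hf).2
end

section
/- Let F be a real vector space and K ⊆ F a nonempty convex set. Let I be a finite nonempty index set, let γ_i, ν_i (i ∈ I) be linear functionals on F, let b_i ∈ ℝ (i ∈ I), and set γ(f) := max_{i∈I} γ_i(f) and ν(f) := max_{i∈I} (ν_i(f) + b_i). Then, as values in [0, +∞], sup_{f∈K} |γ(f) − ν(f)| equals the infimum of e ∈ ℝ over all e and all families (σ^{(i⋆)})_{i⋆∈I}, (τ^{(i⋆)})_{i⋆∈I} in the standard simplex S^I subject to the constraints: ⟦γ_{i⋆} − Σ_{i∈I} σ_i^{(i⋆)} ν_i⟧_K ≤ e + Σ_{i∈I} σ_i^{(i⋆)} b_i for all i⋆ ∈ I, and ⟦ν_{i⋆} − Σ_{i∈I} τ_i^{(i⋆)} γ_i⟧_K ≤ e − b_{i⋆} for all i⋆ ∈ I. -/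
/-!
Weak duality holds pointwise: a simplex average of the `νᵢ f + bᵢ` is at most their
maximum `ν f`, so the `σ`-constraint at an index where `γ f` is attained gives
`γ f - ν f ≤ e`, and the `τ`-constraints give `ν f - γ f ≤ e` in the same way.

Conversely, if `|γ - ν| ≤ c` on `K`, then on `K` every `γ_{i⋆}` lies below
`maxᵢ (νᵢ + bᵢ + c)`. Gordan's alternative for the convex image of `K` in `ℝ^I` replaces
this maximum by a single convex combination, which is a feasible `σ^{(i⋆)}` for `e = c`;
likewise for `τ`. Letting `c` decrease to the supremum gives the reverse inequality.
-/

open Finset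

theorem quasilinearOn_coe_ereal_linearMap {E : Type*} [AddCommGroup E] [Module ℝ E]
    {s : Set E} (hs : Convex ℝ s) (L : E →ₗ[ℝ] ℝ) :
    QuasilinearOn ℝ s fun x => ((L x : ℝ) : EReal) :=
  ⟨(L.convexOn hs).quasiconvexOn.monotone_comp (g := Real.toEReal)
      EReal.coe_strictMono.monotone,
    (L.concaveOn hs).quasiconcaveOn.monotone_comp (g := Real.toEReal)
      EReal.coe_strictMono.monotone⟩

section

variable {ι : Type*} [Fintype ι]

theorem sum_mul_le_ciSup {σ : ι → ℝ} (hσ : σ ∈ stdSimplex ℝ ι) (x : ι → ℝ) :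
    ∑ i, σ i * x i ≤ ⨆ i, x i := calc
  ∑ i, σ i * x i ≤ ∑ i, σ i * ⨆ j, x j :=
    sum_le_sum fun i _ =>
      mul_le_mul_of_nonneg_left (le_ciSup (Finite.bddAbove_range x) i) (hσ.1 i)
  _ = ⨆ j, x j := by rw [← sum_mul, hσ.2, one_mul]

variable [Nonempty ι]

/-- Gordan's alternative, via the minimax theorem for the pairing `-(σ ⬝ᵥ y)` on the compact
simplex times `C`. -/
theorem exists_mem_stdSimplex_forall_dotProduct_nonneg {C : Set (ι → ℝ)} (hC : Convex ℝ C)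
    (h : ∀ y ∈ C, ∃ i, 0 ≤ y i) :
    ∃ σ ∈ stdSimplex ℝ ι, ∀ y ∈ C, 0 ≤ σ ⬝ᵥ y := by
  classical
  set Δ := stdSimplex ℝ ι
  set B := (dotProductBilin ℝ ℝ : (ι → ℝ) →ₗ[ℝ] (ι → ℝ) →ₗ[ℝ] ℝ)
  let φ : (ι → ℝ) → (ι → ℝ) → EReal := fun σ y => ((-(σ ⬝ᵥ y) : ℝ) : EReal)
  have hφ₁ (y : ι → ℝ) : Continuous (φ · y) :=
    continuous_coe_real_ereal.comp (by fun_prop)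
  have hφ₂ (σ : ι → ℝ) : Continuous (φ σ) :=
    continuous_coe_real_ereal.comp (by fun_prop)
  have hΔ : Δ.Nonempty := ⟨_, single_mem_stdSimplex ℝ (Classical.arbitrary ι)⟩
  have hminimax : ⨅ σ ∈ Δ, ⨆ y ∈ C, φ σ y = ⨆ y ∈ C, ⨅ σ ∈ Δ, φ σ y :=
    Sion.minimax' hΔ (convex_stdSimplex ℝ ι) (isCompact_stdSimplex ℝ ι)
      (fun y _ => (hφ₁ y).lowerSemicontinuous.lowerSemicontinuousOn _)
      (fun y _ => (quasilinearOn_coe_ereal_linearMap (convex_stdSimplex ℝ ι) (-B.flip y)).1)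
      hC
      (fun σ _ => (hφ₂ σ).upperSemicontinuous.upperSemicontinuousOn _)
      (fun σ _ => (quasilinearOn_coe_ereal_linearMap hC (-B σ)).2)
  have hmaxmin : ⨆ y ∈ C, ⨅ σ ∈ Δ, φ σ y ≤ 0 := by
    refine iSup₂_le fun y hy => ?_
    obtain ⟨i, hi⟩ := h y hy
    refine iInf₂_le_of_le _ (single_mem_stdSimplex ℝ i) ?_
    simpa [φ] using hi
  obtain ⟨σ, hσ, hmin⟩ :=
    LowerSemicontinuousOn.exists_isMinOn hΔ (isCompact_stdSimplex ℝ ι)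
      (f := fun σ => ⨆ y ∈ C, φ σ y) fun σ _ => lowerSemicontinuousWithinAt_iSup fun y =>
        lowerSemicontinuousWithinAt_iSup fun _ =>
          (hφ₁ y).lowerSemicontinuous.lowerSemicontinuousWithinAt _ _
  refine ⟨σ, hσ, fun y hy => ?_⟩
  have : φ σ y ≤ 0 := calc
    φ σ y ≤ ⨆ y ∈ C, φ σ y := le_iSup₂ (f := fun y _ => φ σ y) y hy
    _ ≤ ⨅ σ ∈ Δ, ⨆ y ∈ C, φ σ y := le_iInf₂ fun σ' hσ' => hmin hσ'
    _ ≤ 0 := hminimax ▸ hmaxmin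
  simpa [φ] using this

theorem Convex.exists_mem_stdSimplex_le_sum_mul {F : Type*} [AddCommGroup F] [Module ℝ F]
    {K : Set F} (hK : Convex ℝ K) (g : F →ᵃ[ℝ] ℝ) (a : ι → F →ᵃ[ℝ] ℝ)
    (h : ∀ f ∈ K, ∃ i, g f ≤ a i f) :
    ∃ σ ∈ stdSimplex ℝ ι, ∀ f ∈ K, g f ≤ ∑ i, σ i * a i f := by
  obtain ⟨σ, hσ, hσK⟩ := exists_mem_stdSimplex_forall_dotProduct_nonneg
    (hK.affine_image (AffineMap.pi fun i => a i - g)) <| by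
      rintro _ ⟨f, hf, rfl⟩
      obtain ⟨i, hi⟩ := h f hf
      exact ⟨i, by simpa using hi⟩
  refine ⟨σ, hσ, fun f hf => ?_⟩
  simpa only [dotProduct, AffineMap.pi_apply, AffineMap.coe_sub, Pi.sub_apply, mul_sub,
    sum_sub_distrib, ← sum_mul, hσ.2, one_mul, sub_nonneg] using hσK _ ⟨f, hf, rfl⟩

theorem ciSup_add_sub_ciSup_add_le {x y s t : ι → ℝ} {e : ℝ}
    (h : ∀ j, ∃ σ ∈ stdSimplex ℝ ι,
      x j - ∑ i, σ i * y i ≤ e - s j + ∑ i, σ i * t i) :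
    (⨆ i, (x i + s i)) - ⨆ i, (y i + t i) ≤ e := by
  obtain ⟨j, hj⟩ := exists_eq_ciSup_of_finite (f := fun i => x i + s i)
  obtain ⟨σ, hσ, hσj⟩ := h j
  have := sum_mul_le_ciSup hσ (y + t)
  simp only [Pi.add_apply, mul_add, sum_add_distrib] at this
  linarith

theorem Convex.exists_mem_stdSimplex_of_ciSup_add_sub_ciSup_add_le
    {F : Type*} [AddCommGroup F] [Module ℝ F] {K : Set F} (hK : Convex ℝ K)
    (x y : ι → F →ₗ[ℝ] ℝ) (s t : ι → ℝ) {e : ℝ}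
    (h : ∀ f ∈ K, (⨆ i, (x i f + s i)) - ⨆ i, (y i f + t i) ≤ e) (j : ι) :
    ∃ σ ∈ stdSimplex ℝ ι,
      ∀ f ∈ K, x j f - ∑ i, σ i * y i f ≤ e - s j + ∑ i, σ i * t i := by
  have hsup (f) (hf : f ∈ K) : ∃ i, x j f ≤ y i f + (t i + e - s j) := by
    obtain ⟨i, hi⟩ := exists_eq_ciSup_of_finite (f := fun i => y i f + t i)
    have := le_ciSup (Finite.bddAbove_range fun i => x i f + s i) j
    exact ⟨i, by linarith [h f hf]⟩
  obtain ⟨σ, hσ, hσK⟩ := hK.exists_mem_stdSimplex_le_sum_mul (x j).toAffineMap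
    (fun i => (y i).toAffineMap + AffineMap.const ℝ F (t i + e - s j)) (by simpa using hsup)
  refine ⟨σ, hσ, fun f hf => ?_⟩
  have := hσK f hf
  simp only [AffineMap.coe_add, LinearMap.coe_toAffineMap, AffineMap.coe_const, Pi.add_apply,
    Function.const_apply, add_sub_assoc, mul_add, sum_add_distrib, ← sum_mul, hσ.2, one_mul]
    at this
  linarith

end

theorem stmt_4_general {F : Type*} [AddCommGroup F] [Module ℝ F]
    (K : Set F) (hK : Convex ℝ K)
    {I : Type*} [Fintype I] [Nonempty I]
    (γi νi : I → F →ₗ[ℝ] ℝ) (b : I → ℝ) :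
    (⨆ f ∈ K, ((|(⨆ i, γi i f) - ⨆ i, (νi i f + b i)| : ℝ) : EReal)) =
      sInf {x : EReal | ∃ e : ℝ, x = ((e : ℝ) : EReal) ∧
        ∃ σ τ : I → I → ℝ,
          (∀ istar, (∀ i, 0 ≤ σ istar i) ∧ ∑ i, σ istar i = 1) ∧
          (∀ istar, (∀ i, 0 ≤ τ istar i) ∧ ∑ i, τ istar i = 1) ∧
          (∀ istar, (⨆ f ∈ K, ((γi istar f - ∑ i, σ istar i * νi i f : ℝ) : EReal)) ≤
            ((e + ∑ i, σ istar i * b i : ℝ) : EReal)) ∧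
          (∀ istar, (⨆ f ∈ K, ((νi istar f - ∑ i, τ istar i * γi i f : ℝ) : EReal)) ≤
            ((e - b istar : ℝ) : EReal))} := by
  simp only [iSup₂_le_iff, EReal.coe_le_coe_iff]
  apply le_antisymm
  · refine le_sInf ?_
    rintro _ ⟨e, rfl, σ, τ, hσ, hτ, hγ, hν⟩
    refine iSup₂_le fun f hf => EReal.coe_le_coe_iff.2 <| abs_sub_le_iff.2 ⟨?_, ?_⟩
    · simpa using ciSup_add_sub_ciSup_add_le (x := (γi · f)) (s := 0) fun j =>
        ⟨σ j, hσ j, by simpa [add_comm] using hγ j f hf⟩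
    · simpa using ciSup_add_sub_ciSup_add_le (y := (γi · f)) (t := 0) fun j =>
        ⟨τ j, hτ j, by simpa using hν j f hf⟩
  · refine EReal.le_of_forall_lt_iff_le.1 fun c hc => sInf_le ⟨c, rfl, ?_⟩
    have hgap (f) (hf : f ∈ K) := abs_sub_le_iff.1 <| EReal.coe_le_coe_iff.1 <|
      (le_iSup₂ (f := fun f (_ : f ∈ K) =>
        ((|(⨆ i, γi i f) - ⨆ i, (νi i f + b i)| : ℝ) : EReal)) f hf).trans hc.le
    choose σ hσ hσK using hK.exists_mem_stdSimplex_of_ciSup_add_sub_ciSup_add_le γi νi 0 b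
      (by simpa using fun f hf => (hgap f hf).1)
    choose τ hτ hτK using hK.exists_mem_stdSimplex_of_ciSup_add_sub_ciSup_add_le νi γi b 0
      (by simpa using fun f hf => (hgap f hf).2)
    exact ⟨σ, τ, hσ, hτ, fun j f hf => by simpa [add_comm] using hσK j f hf,
      fun j f hf => by simpa using hτK j f hf⟩

/-- **Computation of the worst-case error of a fixed sup-affine functional
(Proposition PropGWCEFixed).** For a convex nonempty `K`, the supremum over `K` of
`|γ(f) − ν(f)|` (as a value in the extended reals), where `γ = max_i γi i` and
`ν = max_i (νi i + b i)`, equals the optimal value of the displayed convex program with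
simplex variables `σ, τ` and support-function constraints (infeasible value `⊤`). -/
theorem stmt_4 {F : Type*} [AddCommGroup F] [Module ℝ F]
    (K : Set F) (hK : Convex ℝ K) (hKne : K.Nonempty)
    {I : Type*} [Fintype I] [Nonempty I]
    (γi νi : I → F →ₗ[ℝ] ℝ) (b : I → ℝ) :
    (⨆ f ∈ K, ((|(⨆ i, γi i f) - ⨆ i, (νi i f + b i)| : ℝ) : EReal)) =
      sInf {x : EReal | ∃ e : ℝ, x = ((e : ℝ) : EReal) ∧
        ∃ σ τ : I → I → ℝ,
          (∀ istar, (∀ i, 0 ≤ σ istar i) ∧ ∑ i, σ istar i = 1) ∧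
          (∀ istar, (∀ i, 0 ≤ τ istar i) ∧ ∑ i, τ istar i = 1) ∧
          (∀ istar, (⨆ f ∈ K, ((γi istar f - ∑ i, σ istar i * νi i f : ℝ) : EReal)) ≤
            ((e + ∑ i, σ istar i * b i : ℝ) : EReal)) ∧
          (∀ istar, (⨆ f ∈ K, ((νi istar f - ∑ i, τ istar i * γi i f : ℝ) : EReal)) ≤
            ((e - b istar : ℝ) : EReal))} :=
  stmt_4_general K hK γi νi b
end

section
/- Let F be a real vector space, let λ₁,…,λ_m be linear functionals on F with observation map Λ(f) = (λ₁(f),…,λ_m(f)), and let K ⊆ F be a convex set containing 0. Let I be a finite nonempty index set, γ_i (i ∈ I) linear functionals on F, γ(f) := max_{i∈I} γ_i(f), and assume e_♭ := sup{ (γ(f′) − γ(f″))/2 : f′, f″ ∈ K, Λ(f′) = Λ(f″) } is finite. Consider the convex program: minimize e over e ∈ ℝ, e′, e″ ∈ ℝ^I, vectors c^{(i⋆)} ∈ ℝ^m and σ^{(i⋆)} ∈ S^I (i⋆ ∈ I), subject to e′_{i⋆} + e″_{i⋆} ≤ 2e, ⟦γ_{i⋆} − Σ_{k=1}^m c_k^{(i⋆)}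 λ_k⟧_K ≤ e′_{i⋆}, and ⟦− Σ_{i∈I} σ_i^{(i⋆)} γ_i + Σ_{k=1}^m c_k^{(i⋆)} λ_k⟧_K ≤ e″_{i⋆} for all i⋆ ∈ I. Then the optimal value of this program equals e_♭, and for any optimal solution (ê, ê′, ê″, (ĉ^{(i⋆)}), (σ̂^{(i⋆)})), the sup-affine functional δ(y) := max_{i∈I} ( (ê − ê″_i) + Σ_{k=1}^m ĉ_k^{(i)} y_k ) satisfies sup_{f∈K} |γ(f) − δ(Λ(f))| ≤ e_♭, i.e. δ is an optimal estimation functional. -/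
/-!
Weak duality: if `Λ f' = Λ f''` and `i⋆` attains `γ f'`, the two support-function constraints of
index `i⋆` add up to `γ_{i⋆} f' - ∑ σ_i γ_i f'' ≤ 2e`, and `∑ σ_i γ_i ≤ γ` on the simplex.

No duality gap: fix `i⋆`. The function `h (f', f'') = γ_{i⋆} f' - γ f''` is concave on `K × K`
and at most `2 e_♭` on the kernel of `T (f', f'') = Λ f' - Λ f''`, whose image is symmetric.
Writing `-T x` as a bounded nonnegative combination of points of that image and averaging with `x`
lands in the kernel, which gives `h x ≤ 2 e_♭ + C ‖T x‖`. Hence for `e > e_♭` the point `(0, 2e)`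
is strictly separated from `{(T x, t) : t ≤ h x}` in `ℝ^m × ℝ` by a non-vertical hyperplane,
whose slope is the multiplier `c^{(i⋆)}`. The weights `σ^{(i⋆)}` then come from separating a
linear image of `K` from an open orthant in `ℝ^I`.

The estimate for `δ` holds at every feasible point: it is the two halves of the constraints read
at a single `f`.
-/

open Finset

universe u

theorem LinearMap.apply_eq_sum_mul_single {ι R : Type*} [CommSemiring R] [Fintype ι]
    [DecidableEq ι] (f : (ι → R) →ₗ[R] R) (w : ι → R) :
    f w = ∑ j, w j * f (Pi.single j 1) := by
  conv_lhs => rw [← (LinearEquiv.piRing R R ι R).symm_apply_apply f]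
  simp only [LinearEquiv.piRing_symm_apply, LinearEquiv.piRing_apply, smul_eq_mul]

theorem sum_mul_le_ciSup_of_mem_stdSimplex {ι : Type*} [Fintype ι] {σ : ι → ℝ}
    (hσ : σ ∈ stdSimplex ℝ ι) (x : ι → ℝ) : ∑ i, σ i * x i ≤ ⨆ i, x i :=
  calc ∑ i, σ i * x i ≤ ∑ i, σ i * ⨆ j, x j :=
        sum_le_sum fun i _ =>
          mul_le_mul_of_nonneg_left (le_ciSup (Finite.bddAbove_range x) i) (hσ.1 i)
    _ = ⨆ j, x j := by rw [← sum_mul, hσ.2, one_mul]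

theorem convexOn_ciSup {ι E : Type*} [Finite ι] [Nonempty ι] [AddCommGroup E] [Module ℝ E]
    {s : Set E} {f : ι → E → ℝ} (hf : ∀ i, ConvexOn ℝ s (f i)) :
    ConvexOn ℝ s fun x => ⨆ i, f i x := by
  refine ⟨(hf (Classical.arbitrary ι)).1, fun x hx y hy a b ha hb hab => ciSup_le fun i => ?_⟩
  refine ((hf i).2 hx hy ha hb hab).trans (add_le_add ?_ ?_)
  · exact smul_le_smul_of_nonneg_left (le_ciSup (Finite.bddAbove_range fun i => f i x) i) ha
  · exact smul_le_smul_of_nonneg_left (le_ciSup (Finite.bddAbove_range fun i => f i y) i) hb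

theorem exists_le_and_le_sub_of_add_le {α : Type*} {s t : Set α} (hs : s.Nonempty)
    (ht : t.Nonempty) {p q : α → ℝ} {β : ℝ} (h : ∀ x ∈ s, ∀ y ∈ t, p x + q y ≤ β) :
    ∃ e, (∀ x ∈ s, p x ≤ e) ∧ ∀ y ∈ t, q y ≤ β - e := by
  obtain ⟨y₀, hy₀⟩ := ht
  have hbdd : BddAbove (p '' s) := ⟨β - q y₀, by
    rintro _ ⟨x, hx, rfl⟩
    linarith [h x hx y₀ hy₀]⟩
  refine ⟨sSup (p '' s), fun x hx => le_csSup hbdd ⟨x, hx, rfl⟩, fun y hy => ?_⟩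
  have : sSup (p '' s) ≤ β - q y := csSup_le (hs.image p) (by
    rintro _ ⟨x, hx, rfl⟩
    linarith [h x hx y hy])
  linarith

theorem exists_nonneg_combination_le_mul_norm {E : Type u} [NormedAddCommGroup E]
    [NormedSpace ℝ E] [FiniteDimensional ℝ E] {A : Set E} (hA : ∀ z ∈ A, -z ∈ A) :
    ∃ (ι : Type u) (_ : Fintype ι) (w : ι → E) (C : ℝ), (∀ j, w j ∈ A) ∧
      ∀ z ∈ Submodule.span ℝ A, ∃ b : ι → ℝ, (∀ j, 0 ≤ b j) ∧ ∑ j, b j ≤ C * ‖z‖ ∧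
        ∑ j, b j • w j = z := by
  obtain ⟨s, hsA, hspan, hli⟩ := exists_linearIndependent ℝ A
  have : Fintype s := hli.setFinite.fintype
  let B := Module.Basis.span hli
  let coord (v : s) := LinearMap.toContinuousLinearMap (B.coord v)
  refine ⟨s ⊕ s, inferInstance, Sum.elim (↑) (fun v => -↑v), ∑ v, ‖coord v‖,
    by rintro (v | v) <;> simp [hsA v.2, hA _ (hsA v.2)], fun z hz => ?_⟩
  rw [← hspan, ← Subtype.range_val (s := s)] at hz
  set a := B.repr ⟨z, hz⟩
  refine ⟨Sum.elim (fun v => max (a v) 0) (fun v => max (-a v) 0),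
    by rintro (v | v) <;> simp, ?_, ?_⟩
  · have hcoord (v : s) : |a v| ≤ ‖coord v‖ * ‖z‖ := by
      simpa [coord, a] using (coord v).le_opNorm ⟨z, hz⟩
    simpa [Fintype.sum_sum_type, ← Finset.sum_add_distrib,
      max_zero_add_max_neg_zero_eq_abs_self, Finset.sum_mul] using
      Finset.sum_le_sum fun v _ => hcoord v
  · have := congrArg Subtype.val (B.sum_repr ⟨z, hz⟩)
    simp only [Submodule.coe_sum, Submodule.coe_smul, B, Module.Basis.span_apply] at this
    rw [Fintype.sum_sum_type, ← this, ← Finset.sum_add_distrib]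
    refine Finset.sum_congr rfl fun v _ => ?_
    simp only [Sum.elim_inl, Sum.elim_inr, smul_neg, ← sub_eq_add_neg, ← sub_smul,
      max_zero_sub_max_neg_zero_eq_self, a, B]

theorem ConcaveOn.exists_le_add_mul_norm {V E : Type*} [AddCommGroup V] [Module ℝ V]
    [NormedAddCommGroup E] [NormedSpace ℝ E] [FiniteDimensional ℝ E] {S : Set V} {h : V → ℝ}
    (hh : ConcaveOn ℝ S h) (T : V →ₗ[ℝ] E) (hsymm : ∀ x ∈ S, ∃ y ∈ S, T y = -T x) {b : ℝ}
    (hb : ∀ x ∈ S, T x = 0 → h x ≤ b) :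
    ∃ C, ∀ x ∈ S, h x ≤ b + C * ‖T x‖ := by
  obtain ⟨ι, _, w, C, hwA, hcomb⟩ :=
    exists_nonneg_combination_le_mul_norm (A := T '' S) (by
      rintro _ ⟨x, hx, rfl⟩
      obtain ⟨y, hy, hTy⟩ := hsymm x hx
      exact ⟨y, hy, hTy⟩)
  choose u huS hTu using hwA
  set R := ∑ j, |h (u j)|
  refine ⟨C * (|b| + R), fun x hx => ?_⟩
  obtain ⟨a, ha0, hasum, hax⟩ :=
    hcomb (-T x) (Submodule.neg_mem _ (Submodule.subset_span ⟨x, hx, rfl⟩))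
  -- `x` together with the points `u j`, weighted by `1` and `a j`, has centre of mass in `ker T`
  let wt : Option ι → ℝ := fun o => o.elim 1 a
  let pt : Option ι → V := fun o => o.elim x u
  have hwt0 : ∀ o ∈ univ, 0 ≤ wt o := by rintro (_ | j) _ <;> simp [wt, ha0]
  have hwt : 0 < ∑ o, wt o := by
    simp only [Fintype.sum_option, wt, Option.elim]
    linarith [Finset.sum_nonneg fun j (_ : j ∈ univ) => ha0 j]
  have hpt : ∀ o ∈ univ, pt o ∈ S := by rintro (_ | j) _ <;> simp [pt, hx, huS]
  have hker : T (univ.centerMass wt pt) = 0 := by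
    simp only [Finset.centerMass, map_smul, map_add, map_sum, Fintype.sum_option, wt, pt,
      Option.elim, one_smul, hTu, hax, add_neg_cancel, smul_zero]
  have hjensen := (hh.le_map_centerMass hwt0 hwt hpt).trans
    (hb _ (hh.1.centerMass_mem hwt0 hwt hpt) hker)
  simp only [Finset.centerMass, Fintype.sum_option, wt, pt, Option.elim, Function.comp,
    smul_eq_mul, one_mul] at hjensen
  have ha_sum0 : 0 ≤ ∑ j, a j := sum_nonneg fun j _ => ha0 j
  rw [inv_mul_le_iff₀ (by linarith)] at hjensen
  have hR : -∑ j, a j * h (u j) ≤ (∑ j, a j) * R := by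
    rw [← sum_neg_distrib, sum_mul]
    refine sum_le_sum fun j _ => ?_
    rw [← mul_neg]
    exact mul_le_mul_of_nonneg_left ((neg_le_abs _).trans
      (single_le_sum (f := fun j => |h (u j)|) (fun _ _ => abs_nonneg _) (mem_univ j))) (ha0 j)
  have hb_abs : (∑ j, a j) * b ≤ (∑ j, a j) * |b| :=
    mul_le_mul_of_nonneg_left (le_abs_self b) ha_sum0
  have hC : (∑ j, a j) * (|b| + R) ≤ C * ‖T x‖ * (|b| + R) :=
    mul_le_mul_of_nonneg_right (norm_neg (T x) ▸ hasum) (by positivity)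
  linarith

theorem ConcaveOn.exists_dual_le_add {V E : Type*} [AddCommGroup V] [Module ℝ V]
    [NormedAddCommGroup E] [NormedSpace ℝ E] [FiniteDimensional ℝ E] {S : Set V} {h : V → ℝ}
    (hh : ConcaveOn ℝ S h) (T : V →ₗ[ℝ] E) (hsymm : ∀ x ∈ S, ∃ y ∈ S, T y = -T x) {b β : ℝ}
    (hb : ∀ x ∈ S, T x = 0 → h x ≤ b) (hbβ : b < β) :
    ∃ ℓ : StrongDual ℝ E, ∀ x ∈ S, h x ≤ β + ℓ (T x) := by
  rcases S.eq_empty_or_nonempty with rfl | ⟨x₀, hx₀⟩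
  · exact ⟨0, by simp⟩
  obtain ⟨C, hC⟩ := hh.exists_le_add_mul_norm T hsymm hb
  set D : Set (E × ℝ) := T.prodMap LinearMap.id '' {p | p.1 ∈ S ∧ p.2 ≤ h p.1}
  have hD : Convex ℝ D := hh.convex_hypograph.linear_image _
  have hgraph {x} (hx : x ∈ S) : (T x, h x) ∈ closure D :=
    subset_closure ⟨(x, h x), ⟨hx, le_rfl⟩, rfl⟩
  -- the growth bound keeps `closure D` inside the closed set `t ≤ b + C ‖z‖`, which misses `(0, β)`
  have hβ : ((0 : E), β) ∉ closure D := by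
    have hDC : D ⊆ {p | p.2 ≤ b + C * ‖p.1‖} := by
      rintro _ ⟨⟨x, t⟩, ⟨hx, ht⟩, rfl⟩
      exact ht.trans (hC x hx)
    intro hmem
    have := closure_minimal hDC (isClosed_le (by fun_prop) (by fun_prop)) hmem
    simp only [Set.mem_ofPred_eq, norm_zero, mul_zero, add_zero] at this
    linarith
  obtain ⟨L, u, hLD, huL⟩ := geometric_hahn_banach_closed_point hD.closure isClosed_closure hβ
  set τ := L (0, 1)
  have hL (z : E) (t : ℝ) : L (z, t) = L (z, 0) + t * τ := by
    rw [← smul_eq_mul, ← map_smul, ← map_add]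
    simp
  rw [hL, Prod.mk_zero_zero, map_zero, zero_add] at huL
  -- a point of `S ∩ ker T` (a midpoint of mirror images) makes the hyperplane non-vertical
  have hτ : 0 < τ := by
    obtain ⟨y₀, hy₀, hTy₀⟩ := hsymm x₀ hx₀
    set x₁ := (1 / 2 : ℝ) • x₀ + (1 / 2 : ℝ) • y₀
    have hx₁ : x₁ ∈ S := hh.1 hx₀ hy₀ (by norm_num) (by norm_num) (by norm_num)
    have hTx₁ : T x₁ = 0 := by simp [x₁, hTy₀]
    have := hLD _ (hgraph hx₁)
    rw [hL, hTx₁, Prod.mk_zero_zero, map_zero, zero_add] at this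
    nlinarith [hb x₁ hx₁ hTx₁]
  refine ⟨-τ⁻¹ • L.comp (ContinuousLinearMap.inl ℝ E ℝ), fun x hx => ?_⟩
  have := hLD _ (hgraph hx)
  rw [hL] at this
  change h x ≤ β + -τ⁻¹ * L (T x, 0)
  rw [neg_mul, ← sub_eq_add_neg, le_sub_iff_add_le]
  refine le_of_mul_le_mul_right ?_ hτ
  rw [add_mul, mul_comm τ⁻¹, mul_assoc, inv_mul_cancel₀ hτ.ne', mul_one]
  linarith

theorem exists_mem_stdSimplex_sum_mul_le {I : Type*} [Fintype I] {M : Set (I → ℝ)}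
    (hM : Convex ℝ M) (hne : M.Nonempty) {r : ℝ} (h : ∀ w ∈ M, ∃ j, w j ≤ r) :
    ∃ σ ∈ stdSimplex ℝ I, ∀ w ∈ M, ∑ j, σ j * w j ≤ r := by
  classical
  obtain ⟨w₀, hw₀⟩ := hne
  set O : Set (I → ℝ) := Set.univ.pi fun _ => Set.Ioi r
  have hOM : Disjoint O M := Set.disjoint_left.2 fun w hwO hwM => by
    obtain ⟨j, hj⟩ := h w hwM
    exact (hwO j trivial).not_ge hj
  obtain ⟨φ, u, hφO, hφM⟩ := geometric_hahn_banach_open (convex_pi fun _ _ => convex_Ioi r)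
    (isOpen_set_pi Set.finite_univ fun _ _ => isOpen_Ioi) hM hOM
  set c : I → ℝ := fun j => φ (Pi.single j 1)
  set total := ∑ j, c j
  have hφ (w : I → ℝ) : φ w = ∑ j, w j * c j :=
    LinearMap.apply_eq_sum_mul_single (φ : (I → ℝ) →ₗ[ℝ] ℝ) w
  have hO {s t : ℝ} (hs : r < s) (ht : 0 ≤ t) (j : I) : s * total + t * c j < u := by
    have hmem : (fun _ => s) + t • Pi.single j 1 ∈ O := fun i _ => by
      by_cases hij : i = j <;> simp [hij] <;> linarith
    simpa [hφ (fun _ => s), ← mul_sum, total, c] using hφO _ hmem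
  -- `O` is a translate of an open cone, so `φ < u` on `O` forces `c ≤ 0` and `r * total ≤ u`
  obtain ⟨j₀, -⟩ := h w₀ hw₀
  have hconst {s : ℝ} (hs : r < s) : s * total < u := by simpa using hO hs le_rfl j₀
  have hc (j : I) : c j ≤ 0 := by
    by_contra! hcj
    have := hO (lt_add_one r) (t := (u - (r + 1) * total) / c j)
      (div_nonneg (by linarith [hO (lt_add_one r) le_rfl j]) hcj.le) j
    rw [div_mul_cancel₀ _ hcj.ne'] at this
    linarith
  have htotal : total < 0 := by
    refine (sum_nonpos fun j _ => hc j).lt_of_ne fun htotal0 => ?_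
    have hc0 : ∀ j, c j = 0 := fun j =>
      (sum_eq_zero_iff_of_nonpos fun j _ => hc j).1 htotal0 j (mem_univ j)
    have := hφM w₀ hw₀
    simp only [hφ, hc0, mul_zero, sum_const_zero] at this
    have := hconst (lt_add_one r)
    rw [show total = 0 from htotal0, mul_zero] at this
    linarith
  have hu : r * total ≤ u := by
    by_contra! hu
    have := hconst (lt_add_of_pos_right r (div_pos_of_neg_of_neg (sub_neg.2 hu) htotal))
    rw [add_mul, div_mul_cancel₀ _ htotal.ne] at this
    linarith
  refine ⟨fun j => c j / total, ⟨fun j => div_nonneg_of_nonpos (hc j) htotal.le, ?_⟩,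
    fun w hw => ?_⟩
  · rw [← sum_div, div_self htotal.ne]
  · have hσw : ∑ j, c j / total * w j = φ w / total := by
      rw [hφ, sum_div]
      exact sum_congr rfl fun j _ => by ring
    rw [hσw, div_le_iff_of_neg htotal]
    linarith [hφM w hw]

section Program

variable {F : Type*} [AddCommGroup F] [Module ℝ F] {m : ℕ} (lam : Fin m → F →ₗ[ℝ] ℝ)
  (K : Set F) {I : Type*} [Fintype I] (γi : I → F →ₗ[ℝ] ℝ)

/-- The constraints of the program indexed by `istar`, with each support-function constraint
`⟦g⟧_K ≤ a` written pointwise as `∀ f ∈ K, g f ≤ a`. -/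
def ProgramConstraintsAt (e : ℝ) (istar : I) (e' e'' : ℝ) (c : Fin m → ℝ) (σ : I → ℝ) : Prop :=
  σ ∈ stdSimplex ℝ I ∧ e' + e'' ≤ 2 * e ∧
    (∀ f ∈ K, γi istar f - ∑ k, c k * lam k f ≤ e') ∧
    ∀ f ∈ K, -(∑ i, σ i * γi i f) + ∑ k, c k * lam k f ≤ e''

variable {lam K γi}

theorem ProgramConstraintsAt.sub_ciSup_le {e : ℝ} {istar : I} {e' e'' : ℝ} {c : Fin m → ℝ}
    {σ : I → ℝ} (hF : ProgramConstraintsAt lam K γi e istar e' e'' c σ) {f' f'' : F}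
    (hf' : f' ∈ K) (hf'' : f'' ∈ K) (hΛ : ∀ k, lam k f' = lam k f'') :
    γi istar f' - ⨆ i, γi i f'' ≤ 2 * e := by
  obtain ⟨hσ, hsum, h', h''⟩ := hF
  have hc : ∑ k, c k * lam k f' = ∑ k, c k * lam k f'' := by simp only [hΛ]
  linarith [h' f' hf', h'' f'' hf'', sum_mul_le_ciSup_of_mem_stdSimplex hσ fun i => γi i f'']

theorem abs_ciSup_sub_ciSup_le [Nonempty I] {e : ℝ} {e' e'' : I → ℝ} {c : I → Fin m → ℝ}
    {σ : I → I → ℝ}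
    (hF : ∀ istar,
      ProgramConstraintsAt lam K γi e istar (e' istar) (e'' istar) (c istar) (σ istar))
    {f : F} (hf : f ∈ K) :
    |(⨆ i, γi i f) - ⨆ i, ((e - e'' i) + ∑ k, c i k * lam k f)| ≤ e := by
  have hγ : (⨆ i, γi i f) ≤ (⨆ i, ((e - e'' i) + ∑ k, c i k * lam k f)) + e :=
    ciSup_le fun i => by
      obtain ⟨-, hsum, h', -⟩ := hF i
      linarith [h' f hf,
        le_ciSup (Finite.bddAbove_range fun i => (e - e'' i) + ∑ k, c i k * lam k f) i]
  have hδ : (⨆ i, ((e - e'' i) + ∑ k, c i k * lam k f)) ≤ (⨆ i, γi i f) + e :=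
    ciSup_le fun i => by
      obtain ⟨hσ, -, -, h''⟩ := hF i
      linarith [h'' f hf, sum_mul_le_ciSup_of_mem_stdSimplex hσ fun j => γi j f]
  rw [abs_le]
  constructor <;> linarith

theorem exists_programConstraintsAt [Nonempty I] (hK : Convex ℝ K) (hKne : K.Nonempty)
    {b e : ℝ}
    (hgap : ∀ f' ∈ K, ∀ f'' ∈ K, (∀ k, lam k f' = lam k f'') →
      (⨆ i, γi i f') - ⨆ i, γi i f'' ≤ 2 * b)
    (hbe : b < e) (istar : I) :
    ∃ e' e'' c σ, ProgramConstraintsAt lam K γi e istar e' e'' c σ := by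
  classical
  set Λ : F →ₗ[ℝ] (Fin m → ℝ) := LinearMap.pi lam
  set T : F × F →ₗ[ℝ] (Fin m → ℝ) := Λ ∘ₗ LinearMap.fst ℝ F F - Λ ∘ₗ LinearMap.snd ℝ F F
  have hconc : ConcaveOn ℝ (K ×ˢ K) fun x => γi istar x.1 - ⨆ i, γi i x.2 :=
    ((γi istar ∘ₗ LinearMap.fst ℝ F F).concaveOn (hK.prod hK)).sub
      (((convexOn_ciSup fun i => (γi i).convexOn convex_univ).comp_linearMap
        (LinearMap.snd ℝ F F)).subset (Set.subset_univ _) (hK.prod hK))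
  have hker : ∀ x ∈ K ×ˢ K, T x = 0 → γi istar x.1 - ⨆ i, γi i x.2 ≤ 2 * b := by
    rintro ⟨f', f''⟩ ⟨hf', hf''⟩ hT
    have hΛ (k : Fin m) : lam k f' = lam k f'' := sub_eq_zero.1 (congrFun hT k)
    linarith [hgap f' hf' f'' hf'' hΛ, le_ciSup (Finite.bddAbove_range fun i => γi i f') istar]
  obtain ⟨ℓ, hℓ⟩ := hconc.exists_dual_le_add T
    (fun x hx => ⟨x.swap, ⟨hx.2, hx.1⟩, by simp [T]⟩) hker (by linarith : 2 * b < 2 * e)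
  set c : Fin m → ℝ := fun k => ℓ (Pi.single k 1)
  have hℓΛ (f : F) : ℓ (Λ f) = ∑ k, c k * lam k f := by
    simpa [Λ, c, mul_comm] using
      LinearMap.apply_eq_sum_mul_single (ℓ : (Fin m → ℝ) →ₗ[ℝ] ℝ) (Λ f)
  obtain ⟨e', he', he''⟩ := exists_le_and_le_sub_of_add_le hKne hKne
    (p := fun f => γi istar f - ∑ k, c k * lam k f)
    (q := fun f => ∑ k, c k * lam k f - ⨆ i, γi i f) (β := 2 * e) fun f' hf' f'' hf'' => by
      have := hℓ (f', f'') ⟨hf', hf''⟩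
      simp only [T, LinearMap.sub_apply, LinearMap.comp_apply, LinearMap.fst_apply,
        LinearMap.snd_apply, map_sub, hℓΛ] at this
      linarith
  set L : F →ₗ[ℝ] (I → ℝ) := LinearMap.pi fun j => (ℓ : (Fin m → ℝ) →ₗ[ℝ] ℝ) ∘ₗ Λ - γi j
  obtain ⟨σ, hσ, hσL⟩ := exists_mem_stdSimplex_sum_mul_le (hK.linear_image L) (hKne.image L)
    (r := 2 * e - e') (by
      rintro _ ⟨f, hf, rfl⟩
      obtain ⟨j, hj⟩ := exists_eq_ciSup_of_finite (f := fun i => γi i f)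
      refine ⟨j, ?_⟩
      have := he'' f hf
      simp only [L, LinearMap.pi_apply, LinearMap.sub_apply, LinearMap.comp_apply,
        ContinuousLinearMap.coe_coe, hℓΛ, hj]
      linarith)
  refine ⟨e', 2 * e - e', c, σ, hσ, by linarith, he', fun f hf => ?_⟩
  have := hσL (L f) ⟨f, hf, rfl⟩
  simp only [L, LinearMap.pi_apply, LinearMap.sub_apply, LinearMap.comp_apply,
    ContinuousLinearMap.coe_coe, hℓΛ, mul_sub, sum_sub_distrib, ← sum_mul, hσ.2,
    one_mul] at this
  linarith

end Program

/-- **Construction of an optimal sup-affine estimation functional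
(Proposition ThmConstruction).** The optimal value of the displayed convex program
(with support-function constraints, encoded by the predicate `Feas`) equals the
intrinsic lower bound `eflat`, and any optimal solution yields, via
`δ(y) = max_i ((ê − ê″_i) + ∑_k ĉ^{(i)}_k y_k)`, an estimation functional whose
worst-case error over `K` is at most `eflat`, i.e. an optimal one. -/
theorem stmt_5 {F : Type*} [AddCommGroup F] [Module ℝ F] {m : ℕ}
    (lam : Fin m → F →ₗ[ℝ] ℝ)
    (K : Set F) (hK : Convex ℝ K) (h0K : (0 : F) ∈ K)
    {I : Type*} [Fintype I] [Nonempty I] (γi : I → F →ₗ[ℝ] ℝ)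
    (γ : F → ℝ) (hγ : ∀ f, γ f = ⨆ i, γi i f)
    (eflat : ℝ)
    (heflat : IsLUB {x : ℝ | ∃ f' ∈ K, ∃ f'' ∈ K,
        (∀ k, lam k f' = lam k f'') ∧ x = (γ f' - γ f'') / 2} eflat)
    (Feas : ℝ → (I → ℝ) → (I → ℝ) → (I → Fin m → ℝ) → (I → I → ℝ) → Prop)
    (hFeas : ∀ e e' e'' c σ, Feas e e' e'' c σ ↔
      ((∀ istar, (∀ i, 0 ≤ σ istar i) ∧ ∑ i, σ istar i = 1) ∧
       (∀ istar, e' istar + e'' istar ≤ 2 * e) ∧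
       (∀ istar, (⨆ f ∈ K, ((γi istar f - ∑ k, c istar k * lam k f : ℝ) : EReal)) ≤
          ((e' istar : ℝ) : EReal)) ∧
       (∀ istar,
          (⨆ f ∈ K, ((-(∑ i, σ istar i * γi i f) + ∑ k, c istar k * lam k f : ℝ) : EReal)) ≤
          ((e'' istar : ℝ) : EReal)))) :
    IsGLB {e : ℝ | ∃ e' e'' c σ, Feas e e' e'' c σ} eflat ∧
    (∀ e' e'' c σ, Feas eflat e' e'' c σ →
      ∀ f ∈ K,
        |γ f - ⨆ i, ((eflat - e'' i) + ∑ k, c i k * lam k f)| ≤ eflat) := by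
  have hFeas' : ∀ e e' e'' c σ, Feas e e' e'' c σ ↔ ∀ istar,
      ProgramConstraintsAt lam K γi e istar (e' istar) (e'' istar) (c istar) (σ istar) := by
    intro e e' e'' c σ
    simp only [hFeas, ProgramConstraintsAt, iSup₂_le_iff, EReal.coe_le_coe_iff, stdSimplex,
      Set.mem_ofPred_eq, forall_and]
  refine ⟨⟨?_, fun b hb => ?_⟩, fun e' e'' c σ hF f hf => ?_⟩
  · rintro e ⟨e', e'', c, σ, hF⟩
    refine heflat.2 ?_
    rintro _ ⟨f', hf', f'', hf'', hΛ, rfl⟩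
    obtain ⟨j, hj⟩ := exists_eq_ciSup_of_finite (f := fun i => γi i f')
    have := ((hFeas' ..).1 hF j).sub_ciSup_le hf' hf'' hΛ
    rw [hγ, hγ, ← hj]
    linarith
  · have hgap : ∀ f' ∈ K, ∀ f'' ∈ K, (∀ k, lam k f' = lam k f'') →
        (⨆ i, γi i f') - ⨆ i, γi i f'' ≤ 2 * eflat := fun f' hf' f'' hf'' hΛ => by
      have := heflat.1 ⟨f', hf', f'', hf'', hΛ, rfl⟩
      rw [hγ, hγ] at this
      linarith
    refine le_of_forall_gt_imp_ge_of_dense fun e he => hb ?_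
    choose e' e'' c σ hF using exists_programConstraintsAt hK ⟨0, h0K⟩ hgap he
    exact ⟨e', e'', c, σ, (hFeas' ..).2 hF⟩
  · rw [hγ]
    exact abs_ciSup_sub_ciSup_le ((hFeas' ..).1 hF) hf
end

section
/- Let F be a real vector space, let λ₁,…,λ_m be linear functionals on F with observation map Λ(f) = (λ₁(f),…,λ_m(f)), and let K ⊆ F be a convex set containing 0. Let γ_i be linear functionals on F indexed over finite sets, and suppose γ : F → ℝ admits the representations γ(f) = max_{a∈A} min_{i∈I_a} γ_i(f) = min_{b∈B} max_{j∈J_b} γ_j(f) for all f ∈ F, with A, B finite and nonempty and each I_a, J_b finite and nonempty. Assume e_♭ := sup{ (γ(f′) − γ(f″))/2 : f′, f″ ∈ K, Λ(f′) = Λ(f″) } is finite. Consider the convex program: minimize e over e ∈ ℝ, e′, e″ ∈ ℝ^{A×B}, vectors c^{(a⋆,b⋆)} ∈ ℝ^m, σ^{(a⋆,b⋆)} ∈ S^{I_{a⋆}}, τ^{(a⋆,b⋆)} ∈ S^{J_{b⋆}} (a⋆ ∈ A, b⋆ ∈ B), subject to e′_{a⋆,b⋆} + e″_{a⋆,b⋆}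 ≤ 2e, ⟦Σ_{i∈I_{a⋆}} σ_i^{(a⋆,b⋆)} γ_i − Σ_{k=1}^m c_k^{(a⋆,b⋆)} λ_k⟧_K ≤ e′_{a⋆,b⋆}, and ⟦− Σ_{j∈J_{b⋆}} τ_j^{(a⋆,b⋆)} γ_j + Σ_{k=1}^m c_k^{(a⋆,b⋆)} λ_k⟧_K ≤ e″_{a⋆,b⋆} for all a⋆ ∈ A, b⋆ ∈ B. Then the optimal value of this program equals e_♭, and for any optimal solution, the sup-inf-affine functional δ(y) := max_{a∈A} min_{b∈B} ( (ê − ê″_{a,b}) + Σ_{k=1}^m ĉ_k^{(a,b)} y_k ) satisfies sup_{f∈K} |γ(f) − δ(Λ(f))| ≤ e_♭, i.e. δ is an optimal estimation functional. -/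
/-!
For each pair `(a, b)` the program is the Lagrange dual of the estimate `γ f' - γ f'' ≤ 2 e♭` on
the pairs with equal observations. The image `Z` of `K × K` under
`(f', f'') ↦ ((γ_i f' - γ_j f'')_{(i, j) ∈ I_a × J_b}, Λ f' - Λ f'')` is convex, its fibre over `0`
lies in `{w | min w ≤ 2 e♭}` because `min_{I_a} γ_i ≤ γ ≤ max_{J_b} γ_j`, and its projection to
`ℝ^m` is symmetric. Separating `(0, 0, 2 e♭)` from the hypograph of the perturbation function of
`min w` over `Z` yields a probability vector `μ` on `I_a × J_b` and `c ∈ ℝ^m` with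
`μ · w - c · y ≤ 2 e♭` on `Z`; symmetry of the projection (after restricting to its span) is the
constraint qualification that keeps the weight of the objective nonzero. The marginals of `μ` are
`σ` and `τ`, and splitting `2 e♭` into the two support-function values gives a feasible point with
`e = e♭`.

Conversely, for any feasible point and `f', f''` with equal observations, choosing `a` optimal in
the max-min for `f'` and `b` optimal in the min-max for `f''` gives
`γ f' - γ f'' ≤ σ · γ f' - τ · γ f'' ≤ e' + e'' ≤ 2 e`, and the same sandwich at a single `f`
bounds the error of `δ` by `e♭`.
-/

open Filter Topology

theorem nonpos_of_forall_nonneg_mul_le {a b : ℝ} (h : ∀ t, 0 ≤ t → t * a ≤ b) : a ≤ 0 := by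
  by_contra! ha
  have := h ((|b| + 1) / a) (by positivity)
  rw [div_mul_cancel₀ _ ha.ne'] at this
  linarith [le_abs_self b]

/-- The hypograph of the perturbation function `(p, y) ↦ sup {min_i (w i + p i) | (w, y) ∈ Z}`. -/
def perturbationHypograph {n E : Type*} (Z : Set ((n → ℝ) × E)) : Set ((n → ℝ) × E × ℝ) :=
  {x | ∃ w, (w, x.2.1) ∈ Z ∧ ∀ i, x.2.2 ≤ w i + x.1 i}

section PerturbationHypograph

variable {n E : Type*} {Z : Set ((n → ℝ) × E)} {r : ℝ}

theorem convex_perturbationHypograph [AddCommGroup E] [Module ℝ E] (hZ : Convex ℝ Z) :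
    Convex ℝ (perturbationHypograph Z) := by
  rintro ⟨p₁, y₁, s₁⟩ ⟨w₁, hw₁, h₁⟩ ⟨p₂, y₂, s₂⟩ ⟨w₂, hw₂, h₂⟩ a b ha hb hab
  refine ⟨a • w₁ + b • w₂, hZ hw₁ hw₂ ha hb hab, fun i => ?_⟩
  have := h₁ i
  have := h₂ i
  simp only [Prod.smul_mk, Prod.mk_add_mk, Pi.add_apply, Pi.smul_apply, smul_eq_mul] at *
  nlinarith

theorem exists_forall_le_mem_perturbationHypograph [Finite n] {w : n → ℝ} {y : E}
    (hw : (w, y) ∈ Z) (p : n → ℝ) : ∃ s, ∀ s' ≤ s, (p, y, s') ∈ perturbationHypograph Z := by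
  obtain ⟨s, hs⟩ := (Set.finite_range (w + p)).bddBelow
  exact ⟨s, fun s' hs' => ⟨w, hw, fun i => hs'.trans (hs ⟨i, rfl⟩)⟩⟩

theorem notMem_interior_perturbationHypograph [TopologicalSpace E] [Zero E]
    (hr : ∀ w, (w, 0) ∈ Z → ∃ i, w i ≤ r) :
    ((0 : n → ℝ), (0 : E), r) ∉ interior (perturbationHypograph Z) := by
  intro h
  have hnhds : ∀ᶠ t in 𝓝 (0 : ℝ), ((0 : n → ℝ), (0 : E), r + t) ∈ perturbationHypograph Z := by
    have hcont : Continuous fun t : ℝ => ((0 : n → ℝ), (0 : E), r + t) := by fun_prop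
    exact hcont.tendsto' 0 _ (by simp) (mem_interior_iff_mem_nhds.mp h)
  obtain ⟨t, ⟨w, hw, hle⟩, ht⟩ :=
    ((hnhds.filter_mono nhdsWithin_le_nhds).and self_mem_nhdsWithin).exists (f := 𝓝[>] 0)
  obtain ⟨i, hi⟩ := hr w hw
  have := hle i
  simp only [Pi.zero_apply, add_zero] at this
  linarith [show (0 : ℝ) < t from ht]

theorem interior_perturbationHypograph_nonempty [NormedAddCommGroup E] [NormedSpace ℝ E]
    [FiniteDimensional ℝ E] [Fintype n] (hZ : Convex ℝ Z)
    (hspan : Submodule.span ℝ (Prod.snd '' Z) = ⊤) (h0 : ∃ w, (w, 0) ∈ Z) :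
    (interior (perturbationHypograph Z)).Nonempty := by
  obtain ⟨w₀, hw₀⟩ := h0
  obtain ⟨s₀, hs₀⟩ := exists_forall_le_mem_perturbationHypograph hw₀ 0
  set V := vectorSpan ℝ (perturbationHypograph Z)
  have hdir : ∀ z ∈ Z, ∀ p, (p, z.2, (0 : ℝ)) ∈ V ∧ ((0 : n → ℝ), (0 : E), (1 : ℝ)) ∈ V := by
    rintro ⟨w, y⟩ hz p
    obtain ⟨s₁, hs₁⟩ := exists_forall_le_mem_perturbationHypograph hz p
    set s := min s₁ s₀
    have hs : s - 1 ≤ s₀ := by linarith [min_le_right s₁ s₀]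
    have h₁ := vsub_mem_vectorSpan ℝ (hs₁ s (min_le_left _ _)) (hs₀ s (min_le_right _ _))
    have h₂ := vsub_mem_vectorSpan ℝ (hs₀ s (min_le_right _ _)) (hs₀ (s - 1) hs)
    simp only [vsub_eq_sub, Prod.mk_sub_mk, sub_zero, sub_self, sub_sub_cancel] at h₁ h₂
    exact ⟨h₁, h₂⟩
  have hspanV : Submodule.span ℝ (Prod.snd '' Z) ≤
      V.comap (LinearMap.inr ℝ (n → ℝ) (E × ℝ) ∘ₗ LinearMap.inl ℝ E ℝ) :=
    Submodule.span_le.mpr (by rintro _ ⟨z, hz, rfl⟩; simpa using (hdir z hz 0).1)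
  have hV : V = ⊤ := by
    refine eq_top_iff.mpr fun ⟨p, y, s⟩ _ => ?_
    have hy : ((0 : n → ℝ), y, (0 : ℝ)) ∈ V := by
      simpa using hspanV (hspan ▸ Submodule.mem_top : y ∈ Submodule.span ℝ (Prod.snd '' Z))
    have hdecomp : ((p, y, s) : (n → ℝ) × E × ℝ) =
        (p, 0, 0) + ((0, y, 0) + s • ((0 : n → ℝ), (0 : E), (1 : ℝ))) := by
      simp
    rw [hdecomp]
    exact V.add_mem (hdir _ hw₀ p).1 (V.add_mem hy (V.smul_mem s (hdir _ hw₀ p).2))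
  rw [(convex_perturbationHypograph hZ).interior_nonempty_iff_affineSpan_eq_top,
    AffineSubspace.affineSpan_eq_top_iff_vectorSpan_eq_top_of_nonempty ℝ _ _ ⟨_, hs₀ s₀ le_rfl⟩]
  exact hV

theorem exists_le_on_perturbationHypograph [Fintype n] [NormedAddCommGroup E] [NormedSpace ℝ E]
    [FiniteDimensional ℝ E] (hZ : Convex ℝ Z)
    (hspan : Submodule.span ℝ (Prod.snd '' Z) = ⊤) (h0 : ∃ w, (w, 0) ∈ Z)
    (hr : ∀ w, (w, 0) ∈ Z → ∃ i, w i ≤ r) :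
    ∃ (α : n → ℝ) (β : E →ₗ[ℝ] ℝ) (κ : ℝ), ¬(α = 0 ∧ β = 0 ∧ κ = 0) ∧
      ∀ x ∈ perturbationHypograph Z, ∑ i, x.1 i * α i + β x.2.1 + x.2.2 * κ ≤ r * κ := by
  classical
  obtain ⟨f, hf0, hf⟩ := geometric_hahn_banach_of_nonempty_interior_point
    (convex_perturbationHypograph hZ) (notMem_interior_perturbationHypograph hr)
    (interior_perturbationHypograph_nonempty hZ hspan h0)
  set α : n → ℝ := fun i => f (fun j => if i = j then 1 else 0, 0, 0)
  set β : E →ₗ[ℝ] ℝ := f.toLinearMap ∘ₗ LinearMap.inr ℝ (n → ℝ) (E × ℝ) ∘ₗ LinearMap.inl ℝ E ℝ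
  set κ := f (0, 0, 1)
  have hf_apply : ∀ x, f x = ∑ i, x.1 i * α i + β x.2.1 + x.2.2 * κ := by
    rintro ⟨p, y, s⟩
    show f (p, y, s) = ∑ i, p i * α i + β y + s * κ
    have hsplit : ((p, y, s) : (n → ℝ) × E × ℝ) = (p, 0, 0) + (0, y, 0) + s • (0, 0, 1) := by simp
    have hp : f (p, 0, 0) = ∑ i, p i * α i := by
      simpa [α, Prod.mk_zero_zero] using
        LinearMap.pi_apply_eq_sum_univ (f.toLinearMap ∘ₗ LinearMap.inl ℝ _ (E × ℝ)) p
    rw [hsplit, map_add, map_add, map_smul, hp, smul_eq_mul]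
    rfl
  refine ⟨α, β, κ, fun ⟨hα, hβ, hκ⟩ => hf0 (ContinuousLinearMap.ext fun x => ?_),
    fun x hx => by simpa [hf_apply] using hf x hx⟩
  simp [hf_apply, hα, hβ, hκ]

theorem dual_feasible_of_le_on_perturbationHypograph [Fintype n] [AddCommGroup E] [Module ℝ E]
    {α : n → ℝ} {β : E →ₗ[ℝ] ℝ} {κ : ℝ} (h0 : ∃ w, (w, 0) ∈ Z)
    (h : ∀ x ∈ perturbationHypograph Z, ∑ i, x.1 i * α i + β x.2.1 + x.2.2 * κ ≤ r * κ) :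
    0 ≤ κ ∧ (∀ i, α i ≤ 0) ∧ ∑ i, α i + κ = 0 ∧ ∀ z ∈ Z, -∑ i, z.1 i * α i + β z.2 ≤ r * κ := by
  classical
  obtain ⟨w₀, hw₀⟩ := h0
  obtain ⟨s₀, hs₀⟩ := (Set.finite_range w₀).bddBelow
  have hs₀' : ∀ i, s₀ ≤ w₀ i := fun i => hs₀ ⟨i, rfl⟩
  -- test points: `s → -∞`, `p → +∞` along `e_i`, the diagonal `(t, …, t; 0; s₀ + t)`, and
  -- `(-w, y, 0)` for `(w, y) ∈ Z`
  refine ⟨?_, fun i => ?_, ?_, fun ⟨w, y⟩ hz => by simpa using h (-w, y, 0) ⟨w, hz, by simp⟩⟩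
  · refine neg_nonpos.mp (nonpos_of_forall_nonneg_mul_le (b := (r - s₀) * κ) fun t ht => ?_)
    have := h (0, 0, s₀ - t) ⟨w₀, hw₀, fun i => by
      simp only [Pi.zero_apply, add_zero, tsub_le_iff_right]; linarith [hs₀' i]⟩
    simp only [Pi.zero_apply, zero_mul, Finset.sum_const_zero, map_zero, zero_add] at this
    nlinarith
  · refine nonpos_of_forall_nonneg_mul_le (b := (r - s₀) * κ) fun t ht => ?_
    have := h (fun j => t * if i = j then 1 else 0, 0, s₀) ⟨w₀, hw₀, fun j => by
      show s₀ ≤ w₀ j + t * if i = j then 1 else 0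
      split_ifs <;> linarith [hs₀' j]⟩
    simp only [mul_ite, mul_one, mul_zero, ite_mul, zero_mul, Finset.sum_ite_eq, Finset.mem_univ,
      ↓reduceIte, map_zero, add_zero] at this
    nlinarith
  · have key : ∀ t, t * (∑ i, α i + κ) ≤ (r - s₀) * κ := fun t => by
      have := h (fun _ => t, 0, s₀ + t) ⟨w₀, hw₀, fun j => by
        simp only [add_le_add_iff_right]; exact hs₀' j⟩
      simp only [← Finset.mul_sum, map_zero, add_zero] at this
      nlinarith
    have h₁ := nonpos_of_forall_nonneg_mul_le fun t _ => key t
    have h₂ := nonpos_of_forall_nonneg_mul_le (a := -(∑ i, α i + κ)) (b := (r - s₀) * κ)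
      fun t _ => by linarith [key (-t)]
    linarith

theorem exists_simplex_weights_of_span_eq_top [Fintype n] [NormedAddCommGroup E]
    [NormedSpace ℝ E] [FiniteDimensional ℝ E] (hZ : Convex ℝ Z)
    (hsymm : ∀ z ∈ Z, ∃ w, (w, -z.2) ∈ Z) (hspan : Submodule.span ℝ (Prod.snd '' Z) = ⊤)
    (h0 : ∃ w, (w, 0) ∈ Z) (hr : ∀ w, (w, 0) ∈ Z → ∃ i, w i ≤ r) :
    ∃ μ : n → ℝ, (∀ i, 0 ≤ μ i) ∧ ∑ i, μ i = 1 ∧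
      ∃ β : E →ₗ[ℝ] ℝ, ∀ z ∈ Z, ∑ i, μ i * z.1 i + β z.2 ≤ r := by
  obtain ⟨α, β, κ, hne, hle⟩ := exists_le_on_perturbationHypograph hZ hspan h0 hr
  obtain ⟨hκ, hα, hsum, hZle⟩ := dual_feasible_of_le_on_perturbationHypograph h0 hle
  have hκpos : 0 < κ := by
    refine hκ.lt_of_ne fun hκ0 => hne ?_
    have hα0 : α = 0 := funext fun i =>
      (Finset.sum_eq_zero_iff_of_nonpos fun i _ => hα i).mp (by linarith) i (Finset.mem_univ i)
    refine ⟨hα0, LinearMap.ext_on hspan ?_, hκ0.symm⟩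
    rintro _ ⟨z, hz, rfl⟩
    obtain ⟨w', hw'⟩ := hsymm z hz
    have h₁ := hZle _ hz
    have h₂ := hZle _ hw'
    simp only [hα0, ← hκ0, map_neg, Pi.zero_apply, mul_zero, Finset.sum_const_zero, neg_zero,
      zero_add, LinearMap.zero_apply] at h₁ h₂ ⊢
    linarith
  refine ⟨fun i => -α i / κ, fun i => div_nonneg (neg_nonneg.mpr (hα i)) hκpos.le, ?_,
    κ⁻¹ • β, fun z hz => ?_⟩
  · rw [← Finset.sum_div, Finset.sum_neg_distrib, div_eq_one_iff_eq hκpos.ne']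
    linarith
  · have hrewrite : ∑ i, -α i / κ * z.1 i + (κ⁻¹ • β) z.2 =
        κ⁻¹ * (-∑ i, z.1 i * α i + β z.2) := by
      simp only [LinearMap.smul_apply, smul_eq_mul, mul_add, Finset.mul_sum,
        ← Finset.sum_neg_distrib]
      congr 1
      exact Finset.sum_congr rfl fun i _ => by ring
    rw [hrewrite, inv_mul_le_iff₀ hκpos]
    linarith [hZle z hz]

end PerturbationHypograph

theorem exists_simplex_weights {n E : Type*} [Fintype n] [NormedAddCommGroup E]
    [NormedSpace ℝ E] [FiniteDimensional ℝ E] {Z : Set ((n → ℝ) × E)} (hZ : Convex ℝ Z)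
    (hsymm : ∀ z ∈ Z, ∃ w, (w, -z.2) ∈ Z) (h0 : ∃ w, (w, 0) ∈ Z) {r : ℝ}
    (hr : ∀ w, (w, 0) ∈ Z → ∃ i, w i ≤ r) :
    ∃ μ : n → ℝ, (∀ i, 0 ≤ μ i) ∧ ∑ i, μ i = 1 ∧
      ∃ β : E →ₗ[ℝ] ℝ, ∀ z ∈ Z, ∑ i, μ i * z.1 i + β z.2 ≤ r := by
  set W := Submodule.span ℝ (Prod.snd '' Z)
  set ZW : Set ((n → ℝ) × W) := LinearMap.prodMap LinearMap.id W.subtype ⁻¹' Z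
  have hspan : Submodule.span ℝ (Prod.snd '' ZW) = ⊤ := by
    refine eq_top_iff.mpr (Submodule.span_span_coe_preimage.symm.le.trans (Submodule.span_mono ?_))
    rintro y ⟨z, hz, hzy⟩
    exact ⟨(z.1, y), by simpa [ZW, ← hzy] using hz, rfl⟩
  obtain ⟨μ, hμ, hμ1, β, hβ⟩ := exists_simplex_weights_of_span_eq_top (Z := ZW)
    (hZ.linear_preimage _) (fun z hz => by simpa [ZW] using hsymm _ hz) hspan
    (by obtain ⟨w, hw⟩ := h0; exact ⟨w, by simpa [ZW] using hw⟩)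
    (fun w hw => hr w (by simpa [ZW] using hw))
  obtain ⟨g, hg⟩ := LinearMap.exists_extend β
  refine ⟨μ, hμ, hμ1, g, fun z hz => ?_⟩
  have := hβ (z.1, ⟨z.2, Submodule.subset_span ⟨z, hz, rfl⟩⟩) hz
  rwa [← hg] at this

/-- The simplex `S^I` of the paper, as weights on all of `ι` that vanish off `I`. -/
def simplexOn {ι : Type*} (S : Finset ι) : Set (ι → ℝ) :=
  {σ | (∀ i, 0 ≤ σ i) ∧ (∀ i ∉ S, σ i = 0) ∧ ∑ i ∈ S, σ i = 1}

section SimplexOn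

variable {ι : Type*} {S : Finset ι} {σ : ι → ℝ}

theorem le_sum_mul_of_mem_simplexOn (hσ : σ ∈ simplexOn S) {g : ι → ℝ} {x : ℝ}
    (h : ∀ i ∈ S, x ≤ g i) : x ≤ ∑ i ∈ S, σ i * g i :=
  calc x = ∑ i ∈ S, σ i * x := by rw [← Finset.sum_mul, hσ.2.2, one_mul]
    _ ≤ _ := Finset.sum_le_sum fun i hi => mul_le_mul_of_nonneg_left (h i hi) (hσ.1 i)

theorem sum_mul_le_of_mem_simplexOn (hσ : σ ∈ simplexOn S) {g : ι → ℝ} {x : ℝ}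
    (h : ∀ i ∈ S, g i ≤ x) : ∑ i ∈ S, σ i * g i ≤ x :=
  calc ∑ i ∈ S, σ i * g i ≤ ∑ i ∈ S, σ i * x :=
        Finset.sum_le_sum fun i hi => mul_le_mul_of_nonneg_left (h i hi) (hσ.1 i)
    _ = x := by rw [← Finset.sum_mul, hσ.2.2, one_mul]

theorem exists_mem_simplexOn_sum_mul_eq {n : Type*} [Fintype n] {μ : n → ℝ}
    (hμ : ∀ p, 0 ≤ μ p) (hμ1 : ∑ p, μ p = 1) (g : n → ι) (hg : ∀ p, g p ∈ S) :
    ∃ σ ∈ simplexOn S, ∀ h : ι → ℝ, ∑ i ∈ S, σ i * h i = ∑ p, μ p * h (g p) := by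
  classical
  have hpush : ∀ h : ι → ℝ, ∑ i ∈ S, (∑ p with g p = i, μ p) * h i = ∑ p, μ p * h (g p) := by
    intro h
    simp_rw [Finset.sum_mul]
    rw [← Finset.sum_fiberwise_of_maps_to (fun p _ => hg p)]
    exact Finset.sum_congr rfl fun i _ => Finset.sum_congr rfl fun p hp => by
      rw [(Finset.mem_filter.mp hp).2]
  refine ⟨fun i => ∑ p with g p = i, μ p,
    ⟨fun i => Finset.sum_nonneg fun p _ => hμ p, fun i hi => ?_, ?_⟩, hpush⟩
  · exact Finset.sum_eq_zero fun p hp => absurd ((Finset.mem_filter.mp hp).2 ▸ hg p) hi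
  · simpa [hμ1] using hpush fun _ => 1

end SimplexOn

theorem exists_split_of_forall_add_le {α β : Type*} {s : Set α} {t : Set β} (hs : s.Nonempty)
    (ht : t.Nonempty) {g : α → ℝ} {h : β → ℝ} {c : ℝ} (hgh : ∀ x ∈ s, ∀ y ∈ t, g x + h y ≤ c) :
    ∃ e, (∀ x ∈ s, g x ≤ e) ∧ ∀ y ∈ t, h y ≤ c - e := by
  obtain ⟨y₀, hy₀⟩ := ht
  have hbdd : BddAbove (g '' s) :=
    ⟨c - h y₀, by rintro _ ⟨x, hx, rfl⟩; linarith [hgh x hx y₀ hy₀]⟩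
  refine ⟨sSup (g '' s), fun x hx => le_csSup hbdd ⟨x, hx, rfl⟩, fun y hy => ?_⟩
  have : sSup (g '' s) ≤ c - h y :=
    csSup_le (hs.image g) (by rintro _ ⟨x, hx, rfl⟩; linarith [hgh x hx y hy])
  linarith

theorem exists_simplexOn_multipliers {F ι κ : Type*} [AddCommGroup F] [Module ℝ F] [Fintype κ]
    (lam : κ → F →ₗ[ℝ] ℝ) {K : Set F} (hK : Convex ℝ K) (hKne : K.Nonempty)
    (γi : ι → F →ₗ[ℝ] ℝ) {S T : Finset ι} {r : ℝ}
    (hr : ∀ f' ∈ K, ∀ f'' ∈ K, (∀ k, lam k f' = lam k f'') →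
      ∃ i ∈ S, ∃ j ∈ T, γi i f' - γi j f'' ≤ r) :
    ∃ σ ∈ simplexOn S, ∃ τ ∈ simplexOn T, ∃ c : κ → ℝ, ∃ e,
      (∀ f ∈ K, ∑ i ∈ S, σ i * γi i f - ∑ k, c k * lam k f ≤ e) ∧
      ∀ f ∈ K, -(∑ j ∈ T, τ j * γi j f) + ∑ k, c k * lam k f ≤ r - e := by
  classical
  let Φ : F × F →ₗ[ℝ] (S × T → ℝ) × (κ → ℝ) :=
    (LinearMap.pi fun p : S × T =>
        γi p.1 ∘ₗ LinearMap.fst ℝ F F - γi p.2 ∘ₗ LinearMap.snd ℝ F F).prod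
      (LinearMap.pi fun k => lam k ∘ₗ LinearMap.fst ℝ F F - lam k ∘ₗ LinearMap.snd ℝ F F)
  have hΦ : ∀ x, Φ x = (fun p => γi p.1 x.1 - γi p.2 x.2, fun k => lam k x.1 - lam k x.2) :=
    fun _ => rfl
  obtain ⟨μ, hμ, hμ1, β, hβ⟩ := exists_simplex_weights (Z := Φ '' K ×ˢ K)
    ((hK.prod hK).linear_image Φ)
    (by
      rintro _ ⟨⟨f', f''⟩, ⟨hf', hf''⟩, rfl⟩
      exact ⟨_, ⟨(f'', f'), ⟨hf'', hf'⟩, Prod.ext rfl (funext fun k => by simp [hΦ])⟩⟩)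
    (by
      obtain ⟨f, hf⟩ := hKne
      exact ⟨_, ⟨(f, f), ⟨hf, hf⟩, Prod.ext rfl (funext fun k => by simp [hΦ])⟩⟩)
    (by
      rintro w ⟨⟨f', f''⟩, ⟨hf', hf''⟩, hw⟩
      rw [hΦ, Prod.mk.injEq] at hw
      obtain ⟨i, hi, j, hj, hij⟩ := hr f' hf' f'' hf'' fun k => sub_eq_zero.mp (congrFun hw.2 k)
      exact ⟨(⟨i, hi⟩, ⟨j, hj⟩), by rw [← hw.1]; exact hij⟩)
  obtain ⟨σ, hσ, hσsum⟩ := exists_mem_simplexOn_sum_mul_eq hμ hμ1 (fun p => (p.1 : ι))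
    fun p => p.1.2
  obtain ⟨τ, hτ, hτsum⟩ := exists_mem_simplexOn_sum_mul_eq hμ hμ1 (fun p => (p.2 : ι))
    fun p => p.2.2
  refine ⟨σ, hσ, τ, hτ, fun k => -β fun j => if k = j then 1 else 0,
    exists_split_of_forall_add_le hKne hKne fun f' hf' f'' hf'' => ?_⟩
  have key := hβ _ ⟨(f', f''), ⟨hf', hf''⟩, rfl⟩
  rw [hΦ, LinearMap.pi_apply_eq_sum_univ β] at key
  simp only [mul_sub, Finset.sum_sub_distrib, smul_eq_mul] at key
  rw [hσsum fun i => γi i f', hτsum fun j => γi j f'']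
  have hc : ∑ k, (lam k f' - lam k f'') * (β fun j => if k = j then 1 else 0) =
      ∑ k, (β fun j => if k = j then 1 else 0) * lam k f' -
        ∑ k, (β fun j => if k = j then 1 else 0) * lam k f'' := by
    rw [← Finset.sum_sub_distrib]
    exact Finset.sum_congr rfl fun _ _ => by ring
  simp only [neg_mul, Finset.sum_neg_distrib]
  linarith

section SupInf

variable {α ι β : Type*} [LinearOrder β] {s : Finset α} (hs : s.Nonempty) {t : α → Finset ι}
  (ht : ∀ a, (t a).Nonempty) (g : ι → β)

theorem exists_mem_le_sup'_inf' {a : α} (ha : a ∈ s) :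
    ∃ i ∈ t a, g i ≤ s.sup' hs fun a => (t a).inf' (ht a) g :=
  (Finset.inf'_le_iff _).mp (Finset.le_sup' (fun a => (t a).inf' (ht a) g) ha)

theorem exists_forall_sup'_inf'_le :
    ∃ a ∈ s, ∀ i ∈ t a, (s.sup' hs fun a => (t a).inf' (ht a) g) ≤ g i := by
  obtain ⟨a, ha, hle⟩ :=
    (Finset.le_sup'_iff hs).mp (le_refl (s.sup' hs fun a => (t a).inf' (ht a) g))
  exact ⟨a, ha, (Finset.le_inf'_iff _ _).mp hle⟩

theorem exists_mem_inf'_sup'_le {a : α} (ha : a ∈ s) :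
    ∃ i ∈ t a, (s.inf' hs fun a => (t a).sup' (ht a) g) ≤ g i :=
  (Finset.le_sup'_iff _).mp (Finset.inf'_le (fun a => (t a).sup' (ht a) g) ha)

theorem exists_forall_le_inf'_sup' :
    ∃ a ∈ s, ∀ i ∈ t a, g i ≤ s.inf' hs fun a => (t a).sup' (ht a) g := by
  obtain ⟨a, ha, hle⟩ :=
    (Finset.inf'_le_iff hs).mp (le_refl (s.inf' hs fun a => (t a).sup' (ht a) g))
  exact ⟨a, ha, (Finset.sup'_le_iff _ _).mp hle⟩

end SupInf

theorem abs_sub_iSup_iInf_le {A B : Type*} [Finite A] [Nonempty A] [Finite B] [Nonempty B]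
    {u : A → B → ℝ} {x e : ℝ} (hlow : ∃ a, ∀ b, x - e ≤ u a b) (hup : ∃ b, ∀ a, u a b ≤ x + e) :
    |x - ⨆ a, ⨅ b, u a b| ≤ e := by
  rw [abs_le, neg_le_sub_iff_le_add, sub_le_comm]
  obtain ⟨a, ha⟩ := hlow
  obtain ⟨b, hb⟩ := hup
  exact ⟨ciSup_le fun a => ciInf_le_of_le (Finite.bddBelow_range _) b (hb a),
    le_ciSup_of_le (Finite.bddAbove_range _) a (le_ciInf ha)⟩

/-- **Construction of an optimal sup-inf-affine estimation functional
(Proposition ThmConstruction2).** For `γ` with finite max-min and min-max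
representations by linear functionals, the optimal value of the displayed convex
program (encoded by `Feas`) equals the intrinsic lower bound `eflat`, and any optimal
solution yields, via `δ(y) = max_a min_b ((ê − ê″_{a,b}) + ∑_k ĉ^{(a,b)}_k y_k)`, an
estimation functional with worst-case error at most `eflat` over `K`. -/
theorem stmt_6 {F : Type*} [AddCommGroup F] [Module ℝ F] {m : ℕ}
    (lam : Fin m → F →ₗ[ℝ] ℝ)
    (K : Set F) (hK : Convex ℝ K) (h0K : (0 : F) ∈ K)
    {ι A B : Type*} [Fintype A] [Nonempty A] [Fintype B] [Nonempty B]
    (γi : ι → F →ₗ[ℝ] ℝ)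
    (IA : A → Finset ι) (hIA : ∀ a, (IA a).Nonempty)
    (JB : B → Finset ι) (hJB : ∀ b, (JB b).Nonempty)
    (γ : F → ℝ)
    (hγ1 : ∀ f, γ f =
      Finset.univ.sup' Finset.univ_nonempty fun a => (IA a).inf' (hIA a) fun i => γi i f)
    (hγ2 : ∀ f, γ f =
      Finset.univ.inf' Finset.univ_nonempty fun b => (JB b).sup' (hJB b) fun j => γi j f)
    (eflat : ℝ)
    (heflat : IsLUB {x : ℝ | ∃ f' ∈ K, ∃ f'' ∈ K,
        (∀ k, lam k f' = lam k f'') ∧ x = (γ f' - γ f'') / 2} eflat)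
    (Feas : ℝ → (A → B → ℝ) → (A → B → ℝ) → (A → B → Fin m → ℝ) →
      (A → B → ι → ℝ) → (A → B → ι → ℝ) → Prop)
    (hFeas : ∀ e e' e'' c σ τ, Feas e e' e'' c σ τ ↔
      ((∀ a b, (∀ i, 0 ≤ σ a b i) ∧ (∀ i ∉ IA a, σ a b i = 0) ∧
          ∑ i ∈ IA a, σ a b i = 1) ∧
       (∀ a b, (∀ j, 0 ≤ τ a b j) ∧ (∀ j ∉ JB b, τ a b j = 0) ∧
          ∑ j ∈ JB b, τ a b j = 1) ∧
       (∀ a b, e' a b + e'' a b ≤ 2 * e) ∧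
       (∀ a b, (⨆ f ∈ K,
            (((∑ i ∈ IA a, σ a b i * γi i f) - ∑ k, c a b k * lam k f : ℝ) : EReal)) ≤
          ((e' a b : ℝ) : EReal)) ∧
       (∀ a b, (⨆ f ∈ K,
            ((-(∑ j ∈ JB b, τ a b j * γi j f) + ∑ k, c a b k * lam k f : ℝ) : EReal)) ≤
          ((e'' a b : ℝ) : EReal)))) :
    IsGLB {e : ℝ | ∃ e' e'' c σ τ, Feas e e' e'' c σ τ} eflat ∧
    (∀ e' e'' c σ τ, Feas eflat e' e'' c σ τ →
      ∀ f ∈ K,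
        |γ f - ⨆ a, ⨅ b, ((eflat - e'' a b) + ∑ k, c a b k * lam k f)| ≤ eflat) := by
  simp only [iSup₂_le_iff, EReal.coe_le_coe_iff] at hFeas
  have hγ_ge : ∀ a f, ∃ i ∈ IA a, γi i f ≤ γ f := fun a f => by
    rw [hγ1]; exact exists_mem_le_sup'_inf' _ hIA _ (Finset.mem_univ a)
  have hγ_le : ∀ b f, ∃ j ∈ JB b, γ f ≤ γi j f := fun b f => by
    rw [hγ2]; exact exists_mem_inf'_sup'_le _ hJB _ (Finset.mem_univ b)
  have hγ_max : ∀ f, ∃ a, ∀ i ∈ IA a, γ f ≤ γi i f := fun f => by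
    obtain ⟨a, -, ha⟩ := exists_forall_sup'_inf'_le Finset.univ_nonempty hIA fun i => γi i f
    exact ⟨a, fun i hi => (hγ1 f).trans_le (ha i hi)⟩
  have hγ_min : ∀ f, ∃ b, ∀ j ∈ JB b, γi j f ≤ γ f := fun f => by
    obtain ⟨b, -, hb⟩ := exists_forall_le_inf'_sup' Finset.univ_nonempty hJB fun j => γi j f
    exact ⟨b, fun j hj => (hb j hj).trans_eq (hγ2 f).symm⟩
  have hlower : eflat ∈ lowerBounds {e : ℝ | ∃ e' e'' c σ τ, Feas e e' e'' c σ τ} := by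
    rintro e ⟨e', e'', c, σ, τ, hF⟩
    obtain ⟨hσ, hτ, hsum, h', h''⟩ := (hFeas _ _ _ _ _ _).mp hF
    refine heflat.2 ?_
    rintro _ ⟨f', hf', f'', hf'', hΛ, rfl⟩
    obtain ⟨a, ha⟩ := hγ_max f'
    obtain ⟨b, hb⟩ := hγ_min f''
    have hc : ∑ k, c a b k * lam k f' = ∑ k, c a b k * lam k f'' := by simp only [hΛ]
    linarith [le_sum_mul_of_mem_simplexOn (hσ a b) ha, sum_mul_le_of_mem_simplexOn (hτ a b) hb,
      h' a b f' hf', h'' a b f'' hf'', hsum a b]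
  have hfeas : ∃ e' e'' c σ τ, Feas eflat e' e'' c σ τ := by
    have hr : ∀ a b, ∀ f' ∈ K, ∀ f'' ∈ K, (∀ k, lam k f' = lam k f'') →
        ∃ i ∈ IA a, ∃ j ∈ JB b, γi i f' - γi j f'' ≤ 2 * eflat := fun a b f' hf' f'' hf'' hΛ => by
      obtain ⟨i, hi, hi'⟩ := hγ_ge a f'
      obtain ⟨j, hj, hj'⟩ := hγ_le b f''
      have := heflat.1 ⟨f', hf', f'', hf'', hΛ, rfl⟩
      exact ⟨i, hi, j, hj, by linarith⟩
    choose σ hσ τ hτ c e' he' he'' using fun a b =>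
      exists_simplexOn_multipliers lam hK ⟨0, h0K⟩ γi (hr a b)
    exact ⟨e', fun a b => 2 * eflat - e' a b, c, σ, τ,
      (hFeas _ _ _ _ _ _).mpr ⟨hσ, hτ, fun a b => by linarith, he', he''⟩⟩
  refine ⟨⟨hlower, fun x hx => hx hfeas⟩, fun e' e'' c σ τ hF f hf => ?_⟩
  obtain ⟨hσ, hτ, hsum, h', h''⟩ := (hFeas _ _ _ _ _ _).mp hF
  obtain ⟨a, ha⟩ := hγ_max f
  obtain ⟨b, hb⟩ := hγ_min f
  exact abs_sub_iSup_iInf_le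
    ⟨a, fun b => by linarith [le_sum_mul_of_mem_simplexOn (hσ a b) ha, h' a b f hf, hsum a b]⟩
    ⟨b, fun a => by linarith [sum_mul_le_of_mem_simplexOn (hτ a b) hb, h'' a b f hf]⟩
end

section
/- Let H be a real Hilbert space, let V be a finite-dimensional linear subspace of H with orthogonal projector P_{V⊥} onto its orthogonal complement, let ε > 0, and let g ∈ H with dist(g, V) < ε. Set K := { f ∈ H : ‖P_{V⊥}(f − g)‖ ≤ ε }. Then for every continuous linear functional η on H: if η vanishes on V, then sup_{f∈K} η(f) = η(g) + ε‖η‖ (operator norm of η); and if η does not vanish identically on V, then sup_{f∈K} η(f) = +∞. -/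
/-!
Write `P` for the orthogonal projection onto `Vᗮ`. If `η` vanishes on `V`, then `η = η ∘ P`, so
`η f = η g + η (P (f - g)) ≤ η g + ε ‖η‖` on `K`; conversely `K` contains the closed ball of
radius `ε` about `g`, on which `η` comes arbitrarily close to `η g + ε ‖η‖`. If `η v ≠ 0` for
some `v ∈ V`, then `K` contains the whole line `g + ℝ v`, along which `η` is unbounded.
-/

open Metric

namespace EReal

variable {α : Type*} {s : Set α} {φ : α → ℝ}

lemma biSup_coe_eq_coe {a : ℝ} (hle : ∀ x ∈ s, φ x ≤ a) (hlt : ∀ b < a, ∃ x ∈ s, b < φ x) :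
    ⨆ x ∈ s, (φ x : EReal) = a := by
  refine le_antisymm (iSup₂_le fun x hx ↦ EReal.coe_le_coe_iff.2 (hle x hx)) ?_
  refine le_of_forall_lt fun c hc ↦ ?_
  obtain ⟨b, hcb, hba⟩ := exists_between_coe_real hc
  obtain ⟨x, hx, hbx⟩ := hlt b (EReal.coe_lt_coe_iff.1 hba)
  exact lt_biSup_iff.2 ⟨x, hx, hcb.trans (EReal.coe_lt_coe_iff.2 hbx)⟩

lemma biSup_coe_eq_top (h : ∀ b : ℝ, ∃ x ∈ s, b < φ x) : ⨆ x ∈ s, (φ x : EReal) = ⊤ := by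
  refine (eq_top_iff_forall_lt _).2 fun b ↦ lt_biSup_iff.2 ?_
  obtain ⟨x, hx, hbx⟩ := h b
  exact ⟨x, hx, EReal.coe_lt_coe_iff.2 hbx⟩

end EReal

namespace ContinuousLinearMap

variable {E : Type*} [NormedAddCommGroup E] [NormedSpace ℝ E]

lemma exists_lt_apply_of_lt_opNorm_real (η : E →L[ℝ] ℝ) {r : ℝ} (hr : r < ‖η‖) :
    ∃ x : E, ‖x‖ < 1 ∧ r < η x := by
  obtain ⟨x, hx, hrx⟩ := η.exists_lt_apply_of_lt_opNorm hr
  rcases le_total 0 (η x) with hηx | hηx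
  · exact ⟨x, hx, by rwa [Real.norm_of_nonneg hηx] at hrx⟩
  · exact ⟨-x, by rwa [norm_neg], by rwa [Real.norm_of_nonpos hηx, ← map_neg] at hrx⟩

lemma exists_mem_closedBall_lt_apply (η : E →L[ℝ] ℝ) {ε : ℝ} (hε : 0 < ε) (g : E) {b : ℝ}
    (hb : b < η g + ε * ‖η‖) : ∃ f ∈ closedBall g ε, b < η f := by
  obtain ⟨u, hu, hbu⟩ := η.exists_lt_apply_of_lt_opNorm_real (r := (b - η g) / ε)
    (by rw [div_lt_iff₀' hε]; linarith)
  refine ⟨g + ε • u, ?_, ?_⟩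
  · rw [mem_closedBall, dist_eq_norm, add_sub_cancel_left, norm_smul, Real.norm_of_nonneg hε.le]
    nlinarith [norm_nonneg u]
  · rw [div_lt_iff₀' hε] at hbu
    rw [map_add, map_smul, smul_eq_mul]
    linarith

lemma exists_lt_apply_add_smul (η : E →L[ℝ] ℝ) (g : E) {v : E} (hv : η v ≠ 0) (b : ℝ) :
    ∃ t : ℝ, b < η (g + t • v) :=
  ⟨(b + 1 - η g) / η v, by rw [map_add, map_smul, smul_eq_mul, div_mul_cancel₀ _ hv]; linarith⟩

end ContinuousLinearMap

namespace Submodule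

section RCLike

variable {𝕜 H F : Type*} [RCLike 𝕜] [NormedAddCommGroup H] [InnerProductSpace 𝕜 H]
  [NormedAddCommGroup F] [NormedSpace 𝕜 F]

lemma apply_starProjection_orthogonal_of_forall_mem_eq_zero (V : Submodule 𝕜 H)
    [V.HasOrthogonalProjection] {η : H →L[𝕜] F} (hη : ∀ v ∈ V, η v = 0) (x : H) :
    η (Vᗮ.starProjection x) = η x := by
  conv_rhs => rw [← V.starProjection_add_starProjection_orthogonal x]
  rw [map_add, hη _ (V.starProjection_apply_mem x), zero_add]

lemma norm_starProjection_sub_le_of_mem_closedBall (U : Submodule 𝕜 H) [U.HasOrthogonalProjection]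
    {f g : H} {ε : ℝ} (hf : f ∈ closedBall g ε) : ‖U.starProjection (f - g)‖ ≤ ε :=
  (U.norm_starProjection_apply_le _).trans (by rwa [← dist_eq_norm])

end RCLike

variable {H : Type*} [NormedAddCommGroup H] [InnerProductSpace ℝ H]

lemma apply_le_add_mul_opNorm_of_norm_starProjection_sub_le (V : Submodule ℝ H)
    [V.HasOrthogonalProjection] {η : H →L[ℝ] ℝ} (hη : ∀ v ∈ V, η v = 0) {f g : H} {ε : ℝ}
    (hf : ‖Vᗮ.starProjection (f - g)‖ ≤ ε) : η f ≤ η g + ε * ‖η‖ := by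
  have hdecomp : η f = η g + η (Vᗮ.starProjection (f - g)) := by
    rw [V.apply_starProjection_orthogonal_of_forall_mem_eq_zero hη, map_sub, add_sub_cancel]
  have hbound : η (Vᗮ.starProjection (f - g)) ≤ ε * ‖η‖ :=
    calc η (Vᗮ.starProjection (f - g)) ≤ ‖η‖ * ‖Vᗮ.starProjection (f - g)‖ :=
          (le_abs_self _).trans (η.le_opNorm _)
      _ ≤ ‖η‖ * ε := by gcongr
      _ = ε * ‖η‖ := mul_comm _ _
  linarith

end Submodule

theorem stmt_12_general {H : Type*} [NormedAddCommGroup H] [InnerProductSpace ℝ H]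
    (V : Submodule ℝ H) [FiniteDimensional ℝ V]
    (ε : ℝ) (hε : 0 < ε) (g : H)
    (K : Set H) (hKdef : K = {f : H | ‖(Submodule.orthogonalProjectionOnto Vᗮ (f - g) : H)‖ ≤ ε})
    (η : H →L[ℝ] ℝ) :
    ((∀ v ∈ V, η v = 0) →
      (⨆ f ∈ K, ((η f : ℝ) : EReal)) = ((η g + ε * ‖η‖ : ℝ) : EReal)) ∧
    ((∃ v ∈ V, η v ≠ 0) → (⨆ f ∈ K, ((η f : ℝ) : EReal)) = ⊤) := by
  simp only [Submodule.coe_orthogonalProjectionOnto_apply] at hKdef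
  subst hKdef
  refine ⟨fun hη ↦ EReal.biSup_coe_eq_coe
    (fun f hf ↦ V.apply_le_add_mul_opNorm_of_norm_starProjection_sub_le hη hf) fun b hb ↦ ?_, ?_⟩
  · obtain ⟨f, hf, hbf⟩ := η.exists_mem_closedBall_lt_apply hε g hb
    exact ⟨f, Vᗮ.norm_starProjection_sub_le_of_mem_closedBall hf, hbf⟩
  · rintro ⟨v, hv, hηv⟩
    refine EReal.biSup_coe_eq_top fun b ↦ ?_
    obtain ⟨t, ht⟩ := η.exists_lt_apply_add_smul g hηv b
    refine ⟨g + t • v, ?_, ht⟩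
    rw [Set.mem_ofPred_eq, add_sub_cancel_left,
      V.starProjection_orthogonal_apply_eq_zero (V.smul_mem t hv), norm_zero]
    exact hε.le

/-- **Support function of an approximability model set in a Hilbert space.** For
`K = {f : ‖P_{V⊥}(f − g)‖ ≤ ε}` with `V` finite-dimensional, `ε > 0` and
`dist(g, V) < ε`: if the continuous linear functional `η` vanishes on `V` then the
support function of `K` at `η` equals `η g + ε ‖η‖`; otherwise it equals `+∞`. -/
theorem stmt_12 {H : Type*} [NormedAddCommGroup H] [InnerProductSpace ℝ H]
    [CompleteSpace H]
    (V : Submodule ℝ H) [FiniteDimensional ℝ V]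
    (ε : ℝ) (hε : 0 < ε) (g : H)
    (hg : ‖(Submodule.orthogonalProjectionOnto Vᗮ g : H)‖ < ε)
    (K : Set H) (hKdef : K = {f : H | ‖(Submodule.orthogonalProjectionOnto Vᗮ (f - g) : H)‖ ≤ ε})
    (η : H →L[ℝ] ℝ) :
    ((∀ v ∈ V, η v = 0) →
      (⨆ f ∈ K, ((η f : ℝ) : EReal)) = ((η g + ε * ‖η‖ : ℝ) : EReal)) ∧
    ((∃ v ∈ V, η v ≠ 0) → (⨆ f ∈ K, ((η f : ℝ) : EReal)) = ⊤) :=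
  stmt_12_general V ε hε g K hKdef η
end

section
/- Let F be a real vector space, let λ₁,…,λ_m be linear functionals on F with observation map Λ(f) = (λ₁(f),…,λ_m(f)), and let K ⊆ F be a convex set containing 0. Let I be a nonempty index set and let γ_i (i ∈ I) be linear functionals on F such that γ(f) := sup_{i∈I} γ_i(f) is finite for every f ∈ F. Assume e_♭ := sup{ (γ(f′) − γ(f″))/2 : f′, f″ ∈ K, Λ(f′) = Λ(f″) } is finite. Then for every i⋆ ∈ I there exists a vector c ∈ ℝ^m such that for all f′, f″ ∈ K: ( γ_{i⋆}(f′) − Σ_{k=1}^m c_k λ_k(f′) ) − ( γ(f″) − Σ_{k=1}^m c_k λ_k(f″) ) ≤ 2 e_♭. -/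
/-!
With `h (f', f'') = γ_{i⋆} f' - γ f'' - 2 e_♭`, concave on `K × K` since `γ` is a supremum of
linear functionals, and `Φ (f', f'') = Λ f' - Λ f''`, the hypothesis on `e_♭` says `h ≤ 0` on
`ker Φ`. The supremum of `a * h x` over all `a ≥ 0`, `x ∈ K × K` with `a • Φ x = z` is then a
superlinear function on a subspace of `ℝ^m`: it is finite because swapping `f'` and `f''`
negates `Φ`, and mixing a representation of `z` with one of `-z` lands in `ker Φ`. Hahn–Banach
gives a linear functional dominating it, and its coordinates are the correction `c`.
-/

open Pointwise

section ConeValues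

variable {W E : Type*} [AddCommGroup W] [Module ℝ W] [AddCommGroup E] [Module ℝ E]
  {X : Set W} {Φ : W →ₗ[ℝ] E} {h : W → ℝ}

/-- The fibre over `z` of the cone spanned by the graph `{(Φ x, h x) | x ∈ X}`. -/
def coneValues (X : Set W) (Φ : W →ₗ[ℝ] E) (h : W → ℝ) (z : E) : Set ℝ :=
  {t | ∃ a : ℝ, 0 ≤ a ∧ ∃ x ∈ X, a • Φ x = z ∧ t = a * h x}

lemma mem_coneValues_self {x : W} (hx : x ∈ X) : h x ∈ coneValues X Φ h (Φ x) :=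
  ⟨1, zero_le_one, x, hx, one_smul _ _, (one_mul _).symm⟩

lemma coneValues_smul {c : ℝ} (hc : 0 < c) (z : E) :
    coneValues X Φ h (c • z) = c • coneValues X Φ h z := by
  ext t
  constructor
  · rintro ⟨a, ha, x, hx, hz, rfl⟩
    refine ⟨a / c * h x, ⟨a / c, div_nonneg ha hc.le, x, hx, ?_, rfl⟩, ?_⟩
    · rw [div_eq_inv_mul, mul_smul, hz, smul_smul, inv_mul_cancel₀ hc.ne', one_smul]
    · simp only [smul_eq_mul]
      field_simp
  · rintro ⟨_, ⟨a, ha, x, hx, rfl, rfl⟩, rfl⟩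
    exact ⟨c * a, mul_nonneg hc.le ha, x, hx, mul_smul _ _ _, (mul_assoc _ _ _).symm⟩

lemma ConcaveOn.exists_coneValues_add_ge (hh : ConcaveOn ℝ X h) {z₁ z₂ : E} {t₁ t₂ : ℝ}
    (ht₁ : t₁ ∈ coneValues X Φ h z₁) (ht₂ : t₂ ∈ coneValues X Φ h z₂) :
    ∃ t ∈ coneValues X Φ h (z₁ + z₂), t₁ + t₂ ≤ t := by
  obtain ⟨a, ha, x₁, hx₁, rfl, rfl⟩ := ht₁
  obtain ⟨b, hb, x₂, hx₂, rfl, rfl⟩ := ht₂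
  rcases (add_nonneg ha hb).eq_or_lt with hab | hab
  · obtain ⟨rfl, rfl⟩ : a = 0 ∧ b = 0 := ⟨by linarith, by linarith⟩
    exact ⟨0, ⟨0, le_rfl, x₁, hx₁, by simp, by simp⟩, by simp⟩
  · have hα : 0 ≤ a / (a + b) := div_nonneg ha hab.le
    have hβ : 0 ≤ b / (a + b) := div_nonneg hb hab.le
    have hαβ : a / (a + b) + b / (a + b) = 1 := by field_simp
    refine ⟨(a + b) * h ((a / (a + b)) • x₁ + (b / (a + b)) • x₂),
      ⟨a + b, hab.le, _, hh.1 hx₁ hx₂ hα hβ hαβ, ?_, rfl⟩, ?_⟩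
    · simp only [map_add, map_smul, smul_add, smul_smul]
      congr 2 <;> field_simp
    · calc a * h x₁ + b * h x₂
          = (a + b) * ((a / (a + b)) • h x₁ + (b / (a + b)) • h x₂) := by
            simp only [smul_eq_mul]; field_simp
        _ ≤ _ := mul_le_mul_of_nonneg_left (hh.2 hx₁ hx₂ hα hβ hαβ) hab.le

lemma coneValues_zero_nonpos (hker : ∀ x ∈ X, Φ x = 0 → h x ≤ 0) {t : ℝ}
    (ht : t ∈ coneValues X Φ h 0) : t ≤ 0 := by
  obtain ⟨a, ha, x, hx, hz, rfl⟩ := ht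
  rcases smul_eq_zero.1 hz with rfl | hΦ
  · simp
  · exact mul_nonpos_of_nonneg_of_nonpos ha (hker x hx hΦ)

lemma coneValues_neg_nonempty (hsymm : ∀ x ∈ X, ∃ y ∈ X, Φ y = -Φ x) {z : E}
    (hz : (coneValues X Φ h z).Nonempty) : (coneValues X Φ h (-z)).Nonempty := by
  obtain ⟨_, a, ha, x, hx, rfl, rfl⟩ := hz
  obtain ⟨y, hy, hyx⟩ := hsymm x hx
  exact ⟨_, a, ha, y, hy, by rw [hyx, smul_neg], rfl⟩

lemma ConcaveOn.bddAbove_coneValues (hh : ConcaveOn ℝ X h)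
    (hsymm : ∀ x ∈ X, ∃ y ∈ X, Φ y = -Φ x) (hker : ∀ x ∈ X, Φ x = 0 → h x ≤ 0) {z : E}
    (hz : (coneValues X Φ h z).Nonempty) : BddAbove (coneValues X Φ h z) := by
  obtain ⟨s, hs⟩ := coneValues_neg_nonempty hsymm hz
  refine ⟨-s, fun t ht => ?_⟩
  obtain ⟨u, hu, htu⟩ := hh.exists_coneValues_add_ge ht hs
  rw [add_neg_cancel] at hu
  linarith [coneValues_zero_nonpos hker hu]

def ConcaveOn.coneDomain (hh : ConcaveOn ℝ X h) (hsymm : ∀ x ∈ X, ∃ y ∈ X, Φ y = -Φ x)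
    (hX : X.Nonempty) : Submodule ℝ E where
  carrier := {z | (coneValues X Φ h z).Nonempty}
  zero_mem' := by
    obtain ⟨x, hx⟩ := hX
    exact ⟨0, 0, le_rfl, x, hx, zero_smul _ _, (zero_mul _).symm⟩
  add_mem' := fun ⟨_, ht₁⟩ ⟨_, ht₂⟩ =>
    let ⟨t, ht, _⟩ := hh.exists_coneValues_add_ge ht₁ ht₂; ⟨t, ht⟩
  smul_mem' c z hz := by
    rcases lt_trichotomy c 0 with hc | rfl | hc
    · have : c • z = (-c) • -z := (neg_smul_neg c z).symm
      simp only [Set.mem_ofPred_eq, this, coneValues_smul (neg_pos.2 hc)]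
      exact (coneValues_neg_nonempty hsymm hz).smul_set
    · obtain ⟨x, hx⟩ := hX
      exact ⟨0, 0, le_rfl, x, hx, by simp, (zero_mul _).symm⟩
    · simp only [Set.mem_ofPred_eq, coneValues_smul hc]
      exact hz.smul_set

lemma ConcaveOn.sSup_coneValues_add (hh : ConcaveOn ℝ X h)
    (hsymm : ∀ x ∈ X, ∃ y ∈ X, Φ y = -Φ x) (hker : ∀ x ∈ X, Φ x = 0 → h x ≤ 0) {z₁ z₂ : E}
    (hz₁ : (coneValues X Φ h z₁).Nonempty) (hz₂ : (coneValues X Φ h z₂).Nonempty) :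
    sSup (coneValues X Φ h z₁) + sSup (coneValues X Φ h z₂) ≤
      sSup (coneValues X Φ h (z₁ + z₂)) := by
  rw [← csSup_add hz₁ (hh.bddAbove_coneValues hsymm hker hz₁) hz₂
    (hh.bddAbove_coneValues hsymm hker hz₂)]
  refine csSup_le (hz₁.add hz₂) ?_
  rintro _ ⟨t₁, ht₁, t₂, ht₂, rfl⟩
  obtain ⟨t, ht, hle⟩ := hh.exists_coneValues_add_ge ht₁ ht₂
  exact le_csSup_of_le (hh.bddAbove_coneValues hsymm hker ⟨t, ht⟩) ht hle

theorem ConcaveOn.exists_le_linearMap_comp (hh : ConcaveOn ℝ X h)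
    (hsymm : ∀ x ∈ X, ∃ y ∈ X, Φ y = -Φ x) (hker : ∀ x ∈ X, Φ x = 0 → h x ≤ 0) :
    ∃ c : E →ₗ[ℝ] ℝ, ∀ x ∈ X, h x ≤ c (Φ x) := by
  rcases X.eq_empty_or_nonempty with rfl | hX
  · exact ⟨0, by simp⟩
  set V := hh.coneDomain hsymm hX
  obtain ⟨g, -, hg⟩ := exists_extension_of_le_sublinear (LinearPMap.mk ⊥ 0 : V →ₗ.[ℝ] ℝ)
    (fun z => -sSup (coneValues X Φ h z))
    (fun c hc z => by simp [coneValues_smul hc, Real.sSup_smul_of_nonneg hc.le])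
    (fun z₁ z₂ => by
      simpa [add_comm] using neg_le_neg (hh.sSup_coneValues_add hsymm hker z₁.2 z₂.2))
    (fun z => by
      rw [(Submodule.mem_bot ℝ).1 z.2]
      simpa using Real.sSup_nonpos fun t => coneValues_zero_nonpos hker)
  obtain ⟨c, hc⟩ := LinearMap.exists_extend g
  refine ⟨-c, fun x hx => ?_⟩
  have hxV : Φ x ∈ V := ⟨h x, mem_coneValues_self hx⟩
  calc h x ≤ sSup (coneValues X Φ h (Φ x)) :=
        le_csSup (hh.bddAbove_coneValues hsymm hker hxV) (mem_coneValues_self hx)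
    _ ≤ -g ⟨Φ x, hxV⟩ := le_neg.1 (hg ⟨Φ x, hxV⟩)
    _ = (-c) (Φ x) := by simp [← hc]

end ConeValues

lemma convexOn_univ_of_isLUB_range_linearMap {F ι : Type*} [AddCommGroup F] [Module ℝ F]
    (f : ι → F →ₗ[ℝ] ℝ) {γ : F → ℝ} (hγ : ∀ x, IsLUB (Set.range fun i => f i x) (γ x)) :
    ConvexOn ℝ Set.univ γ := by
  refine ⟨convex_univ, fun x _ y _ a b ha hb _ => (hγ _).2 ?_⟩
  rintro _ ⟨i, rfl⟩
  simp only [map_add, map_smul, smul_eq_mul]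
  exact add_le_add (mul_le_mul_of_nonneg_left ((hγ x).1 ⟨i, rfl⟩) ha)
    (mul_le_mul_of_nonneg_left ((hγ y).1 ⟨i, rfl⟩) hb)

theorem stmt_14_general {F : Type*} [AddCommGroup F] [Module ℝ F] {m : ℕ}
    (lam : Fin m → F →ₗ[ℝ] ℝ)
    (K : Set F) (hK : Convex ℝ K)
    {I : Type*} (γi : I → F →ₗ[ℝ] ℝ)
    (γ : F → ℝ) (hγ : ∀ f, IsLUB (Set.range fun i => γi i f) (γ f))
    (eflat : ℝ)
    (heflat : IsLUB {x : ℝ | ∃ f' ∈ K, ∃ f'' ∈ K,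
        (∀ k, lam k f' = lam k f'') ∧ x = (γ f' - γ f'') / 2} eflat) :
    ∀ istar : I, ∃ c : Fin m → ℝ, ∀ f' ∈ K, ∀ f'' ∈ K,
      (γi istar f' - ∑ k, c k * lam k f') - (γ f'' - ∑ k, c k * lam k f'') ≤
        2 * eflat := by
  intro istar
  have hconcave : ConcaveOn ℝ (K ×ˢ K) (fun p => γi istar p.1 - γ p.2 + -(2 * eflat)) :=
    (((γi istar ∘ₗ LinearMap.fst ℝ F F).concaveOn (hK.prod hK)).sub
      (((convexOn_univ_of_isLUB_range_linearMap γi hγ).comp_linearMap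
        (LinearMap.snd ℝ F F)).subset (Set.subset_univ _) (hK.prod hK))).add_const _
  obtain ⟨c, hc⟩ := hconcave.exists_le_linearMap_comp
    (Φ := LinearMap.pi lam ∘ₗ (LinearMap.fst ℝ F F - LinearMap.snd ℝ F F))
    (fun p hp => ⟨p.swap, hp.symm, by ext; simp⟩)
    (fun p ⟨hp₁, hp₂⟩ hp => by
      have hΛ : ∀ k, lam k p.1 = lam k p.2 := fun k => by
        simpa [sub_eq_zero] using congr_fun hp k
      have hgap : (γ p.1 - γ p.2) / 2 ≤ eflat := heflat.1 ⟨p.1, hp₁, p.2, hp₂, hΛ, rfl⟩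
      have hle : γi istar p.1 ≤ γ p.1 := (hγ p.1).1 ⟨istar, rfl⟩
      linarith)
  refine ⟨fun k => c fun j => if k = j then 1 else 0, fun f' hf' f'' hf'' => ?_⟩
  have hpair := hc (f', f'') ⟨hf', hf''⟩
  rw [LinearMap.pi_apply_eq_sum_univ] at hpair
  simp only [LinearMap.coe_comp, Function.comp_apply, LinearMap.sub_apply, LinearMap.fst_apply,
    LinearMap.snd_apply, LinearMap.pi_apply, map_sub, smul_eq_mul, sub_mul,
    Finset.sum_sub_distrib] at hpair
  simp only [mul_comm] at hpair ⊢
  linarith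

/-- **Hahn–Banach step in the construction of an optimal sup-affine estimation
functional.** Under the hypotheses of the main theorem (sup-linear `γ`, convex `K`
containing `0`, finite intrinsic lower bound `eflat`), for every index `istar` there
is a correction `c ∈ ℝ^m` by the observation functionals making the two-point
inequality hold on `K × K` with slack `2 eflat`. -/
theorem stmt_14 {F : Type*} [AddCommGroup F] [Module ℝ F] {m : ℕ}
    (lam : Fin m → F →ₗ[ℝ] ℝ)
    (K : Set F) (hK : Convex ℝ K) (h0K : (0 : F) ∈ K)
    {I : Type*} [Nonempty I] (γi : I → F →ₗ[ℝ] ℝ)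
    (γ : F → ℝ) (hγ : ∀ f, IsLUB (Set.range fun i => γi i f) (γ f))
    (eflat : ℝ)
    (heflat : IsLUB {x : ℝ | ∃ f' ∈ K, ∃ f'' ∈ K,
        (∀ k, lam k f' = lam k f'') ∧ x = (γ f' - γ f'') / 2} eflat) :
    ∀ istar : I, ∃ c : Fin m → ℝ, ∀ f' ∈ K, ∀ f'' ∈ K,
      (γi istar f' - ∑ k, c k * lam k f') - (γ f'' - ∑ k, c k * lam k f'') ≤
        2 * eflat :=
  stmt_14_general lam K hK γi γ hγ eflat heflat
end

section
/- Let F be a real vector space, let λ₁,…,λ_m be linear functionals on F with observation map Λ(f) = (λ₁(f),…,λ_m(f)), and let K ⊆ F be a convex set containing 0. Let γ_i be linear functionals on F, and suppose γ : F → ℝ admits the two representations γ(f) = sup_{a∈A} inf_{i∈I_a} γ_i(f) = inf_{b∈B} sup_{j∈J_b} γ_j(f) for all f ∈ F, where A, B and the I_a, J_b are nonempty index sets and all suprema and infima are finite. Assume e_♭ := sup{ (γ(f′) − γ(f″))/2 : f′, f″ ∈ K, Λ(f′) = Λ(f″) } is finite. Then for every a⋆ ∈ A and b⋆ ∈ B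 there exists a vector c ∈ ℝ^m such that for all f′, f″ ∈ K: ( inf_{i∈I_{a⋆}} γ_i(f′) − Σ_{k=1}^m c_k λ_k(f′) ) − ( sup_{j∈J_{b⋆}} γ_j(f″) − Σ_{k=1}^m c_k λ_k(f″) ) ≤ 2 e_♭. -/
/-!
On `K × K` the gap `(f', f'') ↦ inf_{I_a} γᵢ f' - sup_{J_b} γⱼ f''` is concave, it is at most
`γ f' - γ f''` and hence at most `2 e♭` on the kernel of `(f', f'') ↦ Λ f' - Λ f''`, and swapping
`f'` and `f''` negates that map. A concave function bounded by `α` on the kernel of a linear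
functional `φ`, on a convex set that is symmetric under `φ`, lies below `α + t φ` for some `t`:
every slope `(h x - α) / φ x` with `φ x > 0` is at most every such slope with `φ x < 0`, since the
convex combination of `x` and `y` killing `φ` stays below `α`. Correcting one coordinate of `Λ` at
a time gives `c`.
-/

section SupInf

variable {E ι : Type*} [AddCommGroup E] [Module ℝ E] {s : Set E} {I : Set ι} {fs : ι → E → ℝ}
  {g : E → ℝ}

theorem ConvexOn.of_isLUB (hs : Convex ℝ s) (hfs : ∀ i ∈ I, ConvexOn ℝ s (fs i))
    (hg : ∀ x ∈ s, IsLUB ((fun i => fs i x) '' I) (g x)) : ConvexOn ℝ s g := by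
  refine ⟨hs, fun x hx y hy a b ha hb hab => (hg _ (hs hx hy ha hb hab)).2 ?_⟩
  rintro _ ⟨i, hi, rfl⟩
  calc fs i (a • x + b • y) ≤ a • fs i x + b • fs i y := (hfs i hi).2 hx hy ha hb hab
    _ ≤ a • g x + b • g y := by
      gcongr
      exacts [(hg x hx).1 ⟨i, hi, rfl⟩, (hg y hy).1 ⟨i, hi, rfl⟩]

theorem ConcaveOn.of_isGLB (hs : Convex ℝ s) (hfs : ∀ i ∈ I, ConcaveOn ℝ s (fs i))
    (hg : ∀ x ∈ s, IsGLB ((fun i => fs i x) '' I) (g x)) : ConcaveOn ℝ s g := by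
  refine ⟨hs, fun x hx y hy a b ha hb hab => (hg _ (hs hx hy ha hb hab)).2 ?_⟩
  rintro _ ⟨i, hi, rfl⟩
  calc a • g x + b • g y ≤ a • fs i x + b • fs i y := by
        gcongr
        exacts [(hg x hx).1 ⟨i, hi, rfl⟩, (hg y hy).1 ⟨i, hi, rfl⟩]
    _ ≤ fs i (a • x + b • y) := (hfs i hi).2 hx hy ha hb hab

end SupInf

section Correction

variable {E : Type*} [AddCommGroup E] [Module ℝ E] {C : Set E} {h : E → ℝ} {α : ℝ}

theorem ConcaveOn.mul_sub_mul_le_of_pos_of_neg (hh : ConcaveOn ℝ C h) (φ : E →ₗ[ℝ] ℝ)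
    (hker : ∀ x ∈ C, φ x = 0 → h x ≤ α) {x y : E} (hx : x ∈ C) (hy : y ∈ C)
    (hφx : 0 < φ x) (hφy : φ y < 0) :
    φ x * h y - φ y * h x ≤ α * (φ x - φ y) := by
  have hd : 0 < φ x - φ y := by linarith
  have ha : 0 ≤ -φ y / (φ x - φ y) := div_nonneg (by linarith) hd.le
  have hb : 0 ≤ φ x / (φ x - φ y) := div_nonneg hφx.le hd.le
  have hab : -φ y / (φ x - φ y) + φ x / (φ x - φ y) = 1 := by
    field_simp; ring
  have hzero : φ ((-φ y / (φ x - φ y)) • x + (φ x / (φ x - φ y)) • y) = 0 := by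
    simp only [map_add, map_smul, smul_eq_mul]; field_simp; ring
  have hcomb := (hh.2 hx hy ha hb hab).trans (hker _ (hh.1 hx hy ha hb hab) hzero)
  simp only [smul_eq_mul] at hcomb
  calc φ x * h y - φ y * h x
        = (-φ y / (φ x - φ y) * h x + φ x / (φ x - φ y) * h y) * (φ x - φ y) := by
          field_simp; ring
    _ ≤ α * (φ x - φ y) := mul_le_mul_of_nonneg_right hcomb hd.le

theorem ConcaveOn.exists_le_add_mul (hh : ConcaveOn ℝ C h) (φ : E →ₗ[ℝ] ℝ)
    (hsymm : ∀ x ∈ C, ∃ y ∈ C, φ y = -φ x) (hker : ∀ x ∈ C, φ x = 0 → h x ≤ α) :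
    ∃ t : ℝ, ∀ x ∈ C, h x ≤ α + t * φ x := by
  have slope_le : ∀ x ∈ C, 0 < φ x → ∀ y ∈ C, φ y < 0 →
      (h x - α) / φ x ≤ (h y - α) / φ y := by
    intro x hx hφx y hy hφy
    rw [div_le_iff₀ hφx, div_mul_eq_mul_div, le_div_iff_of_neg hφy]
    linarith [hh.mul_sub_mul_le_of_pos_of_neg φ hker hx hy hφx hφy]
  set S := (fun x => (h x - α) / φ x) '' {x ∈ C | 0 < φ x}
  have hS : BddAbove S := by
    rcases S.eq_empty_or_nonempty with hS | ⟨_, x, ⟨hx, hφx⟩, rfl⟩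
    · simp [hS]
    obtain ⟨y, hy, hφy⟩ := hsymm x hx
    refine ⟨(h y - α) / φ y, ?_⟩
    rintro _ ⟨z, ⟨hz, hφz⟩, rfl⟩
    exact slope_le z hz hφz y hy (by linarith)
  refine ⟨sSup S, fun x hx => ?_⟩
  rcases lt_trichotomy (φ x) 0 with hφx | hφx | hφx
  · obtain ⟨y, hy, hφy⟩ := hsymm x hx
    have : sSup S ≤ (h x - α) / φ x :=
      csSup_le ⟨_, y, ⟨hy, by linarith⟩, rfl⟩ fun _ ⟨z, ⟨hz, hφz⟩, hz'⟩ =>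
        hz' ▸ slope_le z hz hφz x hx hφx
    rw [le_div_iff_of_neg hφx] at this
    linarith
  · simpa [hφx] using hker x hx hφx
  · have : (h x - α) / φ x ≤ sSup S := le_csSup hS ⟨x, ⟨hx, hφx⟩, rfl⟩
    rw [div_le_iff₀ hφx] at this
    linarith

theorem ConcaveOn.exists_le_add_sum {ι : Type*} [DecidableEq ι] (ℓ : ι → E →ₗ[ℝ] ℝ)
    (hsymm : ∀ x ∈ C, ∃ y ∈ C, ∀ k, ℓ k y = -ℓ k x) (s : Finset ι) (hh : ConcaveOn ℝ C h)
    (hker : ∀ x ∈ C, (∀ k ∈ s, ℓ k x = 0) → h x ≤ α) :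
    ∃ c : ι → ℝ, ∀ x ∈ C, h x ≤ α + ∑ k ∈ s, c k * ℓ k x := by
  induction s using Finset.induction generalizing h with
  | empty => exact ⟨0, fun x hx => by simpa using hker x hx (by simp)⟩
  | @insert k s hks ih =>
    set Cs := {x ∈ C | ∀ j ∈ s, ℓ j x = 0}
    have hCs : Convex ℝ Cs := hh.1.inter fun x hx y hy a b _ _ _ j hj => by
      simp [hx j hj, hy j hj]
    obtain ⟨t, ht⟩ := (hh.subset (Set.sep_subset _ _) hCs).exists_le_add_mul (ℓ k)
      (fun x ⟨hx, hxs⟩ => by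
        obtain ⟨y, hy, hyx⟩ := hsymm x hx
        exact ⟨y, ⟨hy, fun j hj => by simp [hyx, hxs j hj]⟩, hyx k⟩)
      (fun x ⟨hx, hxs⟩ hxk => hker x hx (by simpa [hxk] using hxs))
    obtain ⟨c, hc⟩ := ih (h := fun x => h x - t * ℓ k x)
      (hh.sub ((t • ℓ k).convexOn hh.1))
      (fun x hx hxs => by linarith [ht x ⟨hx, hxs⟩])
    refine ⟨Function.update c k t, fun x hx => ?_⟩
    have hsum : ∑ j ∈ s, Function.update c k t j * ℓ j x = ∑ j ∈ s, c j * ℓ j x :=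
      Finset.sum_congr rfl fun j hj => by rw [Function.update_of_ne (ne_of_mem_of_not_mem hj hks)]
    rw [Finset.sum_insert hks, hsum, Function.update_self]
    linarith [hc x hx]

end Correction

theorem stmt_16_general {F : Type*} [AddCommGroup F] [Module ℝ F] {m : ℕ}
    (lam : Fin m → F →ₗ[ℝ] ℝ)
    (K : Set F) (hK : Convex ℝ K)
    {ι A B : Type*}
    (γi : ι → F →ₗ[ℝ] ℝ)
    (Ia : A → Set ι)
    (Jb : B → Set ι)
    (ginf : A → F → ℝ) (hginf : ∀ a f, IsGLB ((fun i => γi i f) '' Ia a) (ginf a f))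
    (gsup : B → F → ℝ) (hgsup : ∀ b f, IsLUB ((fun j => γi j f) '' Jb b) (gsup b f))
    (γ : F → ℝ)
    (hγ1 : ∀ f, IsLUB (Set.range fun a => ginf a f) (γ f))
    (hγ2 : ∀ f, IsGLB (Set.range fun b => gsup b f) (γ f))
    (eflat : ℝ)
    (heflat : IsLUB {x : ℝ | ∃ f' ∈ K, ∃ f'' ∈ K,
        (∀ k, lam k f' = lam k f'') ∧ x = (γ f' - γ f'') / 2} eflat) :
    ∀ (a : A) (b : B), ∃ c : Fin m → ℝ, ∀ f' ∈ K, ∀ f'' ∈ K,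
      (ginf a f' - ∑ k, c k * lam k f') - (gsup b f'' - ∑ k, c k * lam k f'') ≤
        2 * eflat := by
  intro a b
  have hinf : ConcaveOn ℝ Set.univ (ginf a) :=
    .of_isGLB convex_univ (fun i _ => (γi i).concaveOn convex_univ) fun f _ => hginf a f
  have hsup : ConvexOn ℝ Set.univ (gsup b) :=
    .of_isLUB convex_univ (fun j _ => (γi j).convexOn convex_univ) fun f _ => hgsup b f
  have hgap : ConcaveOn ℝ (K ×ˢ K) fun p : F × F => ginf a p.1 - gsup b p.2 :=
    ((hinf.comp_linearMap (.fst ℝ F F)).sub (hsup.comp_linearMap (.snd ℝ F F))).subset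
      (Set.subset_univ _) (hK.prod hK)
  obtain ⟨c, hc⟩ := hgap.exists_le_add_sum (α := 2 * eflat)
    (fun k => lam k ∘ₗ .fst ℝ F F - lam k ∘ₗ .snd ℝ F F)
    (fun p hp => ⟨p.swap, Set.mem_prod.2 ⟨hp.2, hp.1⟩, fun k => by simp⟩) Finset.univ
    fun p hp hΛ => by
      have hΛ' : ∀ k, lam k p.1 = lam k p.2 := fun k =>
        sub_eq_zero.1 (hΛ k (Finset.mem_univ k))
      have : (γ p.1 - γ p.2) / 2 ≤ eflat := heflat.1 ⟨p.1, hp.1, p.2, hp.2, hΛ', rfl⟩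
      linarith [(hγ1 p.1).1 ⟨a, rfl⟩, (hγ2 p.2).1 ⟨b, rfl⟩]
  refine ⟨c, fun f' hf' f'' hf'' => ?_⟩
  have := hc (f', f'') (Set.mk_mem_prod hf' hf'')
  simp only [LinearMap.sub_apply, LinearMap.comp_apply, LinearMap.fst_apply, LinearMap.snd_apply,
    mul_sub, Finset.sum_sub_distrib] at this
  linarith

/-- **Dominated-extension step in the construction of an optimal sup-inf-affine
estimation functional.** Under the hypotheses of the sup-inf theorem (finite sup-inf
and inf-sup representations of `γ`, convex `K` containing `0`, finite `eflat`), for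
all `a, b` there is a correction `c ∈ ℝ^m` by the observation functionals making the
two-point inequality between `inf_{i ∈ I_a} γ i` and `sup_{j ∈ J_b} γ j` hold on
`K × K` with slack `2 eflat`. -/
theorem stmt_16 {F : Type*} [AddCommGroup F] [Module ℝ F] {m : ℕ}
    (lam : Fin m → F →ₗ[ℝ] ℝ)
    (K : Set F) (hK : Convex ℝ K) (h0K : (0 : F) ∈ K)
    {ι A B : Type*} [Nonempty A] [Nonempty B]
    (γi : ι → F →ₗ[ℝ] ℝ)
    (Ia : A → Set ι) (hIa : ∀ a, (Ia a).Nonempty)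
    (Jb : B → Set ι) (hJb : ∀ b, (Jb b).Nonempty)
    (ginf : A → F → ℝ) (hginf : ∀ a f, IsGLB ((fun i => γi i f) '' Ia a) (ginf a f))
    (gsup : B → F → ℝ) (hgsup : ∀ b f, IsLUB ((fun j => γi j f) '' Jb b) (gsup b f))
    (γ : F → ℝ)
    (hγ1 : ∀ f, IsLUB (Set.range fun a => ginf a f) (γ f))
    (hγ2 : ∀ f, IsGLB (Set.range fun b => gsup b f) (γ f))
    (eflat : ℝ)
    (heflat : IsLUB {x : ℝ | ∃ f' ∈ K, ∃ f'' ∈ K,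
        (∀ k, lam k f' = lam k f'') ∧ x = (γ f' - γ f'') / 2} eflat) :
    ∀ (a : A) (b : B), ∃ c : Fin m → ℝ, ∀ f' ∈ K, ∀ f'' ∈ K,
      (ginf a f' - ∑ k, c k * lam k f') - (gsup b f'' - ∑ k, c k * lam k f'') ≤
        2 * eflat :=
  stmt_16_general lam K hK γi Ia Jb ginf hginf gsup hgsup γ hγ1 hγ2 eflat heflat
end

section
/- Let F be a real vector space, let λ₁,…,λ_m be linear functionals on F with observation map Λ(f) = (λ₁(f),…,λ_m(f)), and let K ⊆ F be a set containing 0. Let γ_i be linear functionals on F, and suppose γ : F → ℝ admits the two representations γ(f) = sup_{a∈A} inf_{i∈I_a} γ_i(f) = inf_{b∈B} sup_{j∈J_b} γ_j(f) for all f ∈ F, where A, B and the I_a, J_b are nonempty index sets and all suprema and infima are finite. Let e ≥ 0 and suppose that for each a ∈ A and b ∈ B there is a vector c^{(a,b)} ∈ ℝ^m such that for all f′, f″ ∈ K: ( inf_{i∈I_a} γ_i(f′) − Σ_{k=1}^m c_k^{(a,b)} λ_k(f′) ) − ( sup_{j∈J_b} γ_j(f″) − Σ_{k=1}^m c_k^{(a,b)}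 λ_k(f″) ) ≤ 2e. Define c₀^{(a,b)} := inf_{f∈K} ( sup_{j∈J_b} γ_j(f) − Σ_{k=1}^m c_k^{(a,b)} λ_k(f) ) + e. Then for every f ∈ K, the value δ(Λ(f)) := sup_{a∈A} inf_{b∈B} ( c₀^{(a,b)} + Σ_{k=1}^m c_k^{(a,b)} λ_k(f) ) is finite and satisfies |γ(f) − δ(Λ(f))| ≤ e. -/
/-- **Combination step in the construction of an optimal sup-inf-affine estimation
functional.** Given coefficient vectors `c a b` satisfying the key two-point
inequality on `K` with slack `2e`, the constants
`c0 a b := inf_{f ∈ K} (sup_{j ∈ J_b} γ j f − ∑ k, c a b k * λ k f) + e` yield, for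
every `f ∈ K`, a finite value `d` of the sup-inf-affine expression (computed in the
extended reals) with `|γ f − d| ≤ e`. -/
theorem stmt_17 {F : Type*} [AddCommGroup F] [Module ℝ F] {m : ℕ}
    (lam : Fin m → F →ₗ[ℝ] ℝ)
    (K : Set F) (h0K : (0 : F) ∈ K)
    {ι A B : Type*} [Nonempty A] [Nonempty B]
    (γi : ι → F →ₗ[ℝ] ℝ)
    (Ia : A → Set ι) (hIa : ∀ a, (Ia a).Nonempty)
    (Jb : B → Set ι) (hJb : ∀ b, (Jb b).Nonempty)
    (ginf : A → F → ℝ) (hginf : ∀ a f, IsGLB ((fun i => γi i f) '' Ia a) (ginf a f))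
    (gsup : B → F → ℝ) (hgsup : ∀ b f, IsLUB ((fun j => γi j f) '' Jb b) (gsup b f))
    (γ : F → ℝ)
    (hγ1 : ∀ f, IsLUB (Set.range fun a => ginf a f) (γ f))
    (hγ2 : ∀ f, IsGLB (Set.range fun b => gsup b f) (γ f))
    (e : ℝ) (he : 0 ≤ e)
    (c : A → B → Fin m → ℝ)
    (hc : ∀ (a : A) (b : B), ∀ f' ∈ K, ∀ f'' ∈ K,
      (ginf a f' - ∑ k, c a b k * lam k f') -
        (gsup b f'' - ∑ k, c a b k * lam k f'') ≤ 2 * e)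
    (c0 : A → B → ℝ)
    (hc0 : ∀ a b, c0 a b =
      sInf {x : ℝ | ∃ f ∈ K, x = gsup b f - ∑ k, c a b k * lam k f} + e) :
    ∀ f ∈ K, ∃ d : ℝ,
      (⨆ a, ⨅ b, ((c0 a b + ∑ k, c a b k * lam k f : ℝ) : EReal)) = ((d : ℝ) : EReal) ∧
      |γ f - d| ≤ e := by
  intro f hf
  -- key real inequalities
  have h1 : ∀ a b, ginf a f - e ≤ c0 a b + ∑ k, c a b k * lam k f := by
    intro a b
    have hne : {x : ℝ | ∃ f' ∈ K, x = gsup b f' - ∑ k, c a b k * lam k f'}.Nonempty :=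
      ⟨_, 0, h0K, rfl⟩
    have hinf : (ginf a f - ∑ k, c a b k * lam k f) - 2*e ≤
        sInf {x : ℝ | ∃ f' ∈ K, x = gsup b f' - ∑ k, c a b k * lam k f'} := by
      apply le_csInf hne
      rintro x ⟨f', hf', rfl⟩
      have := hc a b f hf f' hf'
      linarith
    rw [hc0]
    linarith
  have h2 : ∀ a b, c0 a b + ∑ k, c a b k * lam k f ≤ gsup b f + e := by
    intro a b
    have hbdd : BddBelow {x : ℝ | ∃ f' ∈ K, x = gsup b f' - ∑ k, c a b k * lam k f'} := by
      refine ⟨(ginf a f - ∑ k, c a b k * lam k f) - 2*e, ?_⟩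
      rintro x ⟨f', hf', rfl⟩
      have := hc a b f hf f' hf'
      linarith
    have hle : sInf {x : ℝ | ∃ f' ∈ K, x = gsup b f' - ∑ k, c a b k * lam k f'} ≤
        gsup b f - ∑ k, c a b k * lam k f := csInf_le hbdd ⟨f, hf, rfl⟩
    rw [hc0]
    linarith
  set E : EReal := ⨆ a, ⨅ b, ((c0 a b + ∑ k, c a b k * lam k f : ℝ) : EReal) with hE
  obtain ⟨a0⟩ := ‹Nonempty A›
  obtain ⟨b0⟩ := ‹Nonempty B›
  have hEup : ∀ b, E ≤ ((gsup b f + e : ℝ) : EReal) := by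
    intro b
    apply iSup_le
    intro a
    exact le_trans (iInf_le _ b) (by exact_mod_cast h2 a b)
  have hElo : ∀ a, ((ginf a f - e : ℝ) : EReal) ≤ E := by
    intro a
    refine le_iSup_of_le a (le_iInf fun b => ?_)
    exact_mod_cast h1 a b
  have hnt : E ≠ ⊤ := by
    intro h
    have := hEup b0
    rw [h] at this
    exact (EReal.coe_lt_top _).not_ge this
  have hnb : E ≠ ⊥ := by
    intro h
    have := hElo a0
    rw [h] at this
    exact (EReal.bot_lt_coe _).not_ge this
  refine ⟨E.toReal, (EReal.coe_toReal hnt hnb).symm, ?_⟩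
  set d := E.toReal with hd
  have hEd : E = ((d : ℝ) : EReal) := (EReal.coe_toReal hnt hnb).symm
  have hup : ∀ b, d ≤ gsup b f + e := by
    intro b
    have := hEup b
    rw [hEd] at this
    exact_mod_cast this
  have hlo : ∀ a, ginf a f - e ≤ d := by
    intro a
    have := hElo a
    rw [hEd] at this
    exact_mod_cast this
  have hγle : γ f ≤ d + e := by
    apply (hγ1 f).2
    rintro x ⟨a, rfl⟩
    have := hlo a
    linarith
  have hγge : d - e ≤ γ f := by
    apply (hγ2 f).2
    rintro x ⟨b, rfl⟩
    have := hup b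
    linarith
  rw [abs_le]
  constructor <;> linarith
end

section
/- Let F be a real vector space, let Λ : F → ℝ^m be a linear map, let K ⊆ F be a convex set containing 0, and let γ : F → ℝ be positively homogeneous (γ(t f) = t γ(f) for all t ≥ 0 and f ∈ F). Let e ≥ 0 be such that γ(f′) − γ(f″) ≤ 2e for all f′, f″ ∈ K with Λ(f′) = Λ(f″). Then for all f′, f″ ∈ F with Λ(f′) = Λ(f″) and with ρ_K(f′) < ∞ and ρ_K(f″) < ∞, one has γ(f′) − γ(f″) ≤ 2e · max( ρ_K(f′), ρ_K(f″) ). -/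
/-! If `ρ_K(f) < t`, then `t⁻¹ • f ∈ K`, because `K` is convex and contains `0`. Positive
homogeneity of `γ` therefore turns the two-point bound on `K` into `γ f' − γ f'' ≤ 2e t` for
every `t` above both gauges, and letting `t` decrease to their maximum gives the claim. -/

open scoped ENNReal Pointwise
open Filter

/-- The Minkowski gauge of a set `C` at `x`, valued in `[0, +∞]`:
`ρ_C(x) = inf {t > 0 : x ∈ t • C}`, with `inf ∅ = +∞`. -/
noncomputable def gaugeE {E : Type*} [AddCommGroup E] [Module ℝ E]
    (C : Set E) (x : E) : ℝ≥0∞ :=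
  sInf ((fun t : ℝ => ENNReal.ofReal t) '' {t : ℝ | 0 < t ∧ x ∈ t • C})

theorem exists_lt_of_gaugeE_lt {E : Type*} [AddCommGroup E] [Module ℝ E] {C : Set E} {x : E}
    {t : ℝ} (h : gaugeE C x < ENNReal.ofReal t) : ∃ s, 0 < s ∧ s < t ∧ x ∈ s • C := by
  obtain ⟨_, ⟨s, ⟨hs, hx⟩, rfl⟩, hst⟩ := sInf_lt_iff.mp h
  exact ⟨s, hs, (ENNReal.ofReal_lt_ofReal_iff'.mp hst).1, hx⟩

theorem Convex.inv_smul_mem_of_gaugeE_lt {E : Type*} [AddCommGroup E] [Module ℝ E] {K : Set E}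
    (hK : Convex ℝ K) (h0K : (0 : E) ∈ K) {x : E} {t : ℝ} (h : gaugeE K x < ENNReal.ofReal t) :
    t⁻¹ • x ∈ K := by
  obtain ⟨s, hs, hst, y, hy, rfl⟩ := exists_lt_of_gaugeE_lt h
  have ht : 0 < t := hs.trans hst
  rw [smul_smul, ← div_eq_inv_mul]
  exact hK.smul_mem_of_zero_mem h0K hy ⟨by positivity, div_le_one_of_le₀ hst.le ht.le⟩

theorem eq_mul_apply_inv_smul_of_pos_homogeneous {E : Type*} [AddCommGroup E] [Module ℝ E]
    {γ : E → ℝ} (hγ : ∀ t : ℝ, 0 ≤ t → ∀ f, γ (t • f) = t * γ f) {t : ℝ} (ht : 0 < t) (f : E) :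
    γ f = t * γ (t⁻¹ • f) := by
  rw [← hγ t ht.le, smul_smul, mul_inv_cancel₀ ht.ne', one_smul]

theorem sub_le_two_mul_mul_of_gaugeE_lt {F G : Type*} [AddCommGroup F] [Module ℝ F]
    [AddCommGroup G] [Module ℝ G] (Λ : F →ₗ[ℝ] G) {K : Set F} (hK : Convex ℝ K)
    (h0K : (0 : F) ∈ K) {γ : F → ℝ} (hγ : ∀ t : ℝ, 0 ≤ t → ∀ f, γ (t • f) = t * γ f) {e : ℝ}
    (hKe : ∀ f' ∈ K, ∀ f'' ∈ K, Λ f' = Λ f'' → γ f' - γ f'' ≤ 2 * e) {f' f'' : F}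
    (hΛ : Λ f' = Λ f'') {t : ℝ} (ht : 0 < t) (h' : gaugeE K f' < ENNReal.ofReal t)
    (h'' : gaugeE K f'' < ENNReal.ofReal t) :
    γ f' - γ f'' ≤ 2 * e * t := by
  have hbound := hKe _ (hK.inv_smul_mem_of_gaugeE_lt h0K h') _
    (hK.inv_smul_mem_of_gaugeE_lt h0K h'') (by rw [map_smul, map_smul, hΛ])
  calc γ f' - γ f'' = t * (γ (t⁻¹ • f') - γ (t⁻¹ • f'')) := by
        rw [mul_sub, ← eq_mul_apply_inv_smul_of_pos_homogeneous hγ ht,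
          ← eq_mul_apply_inv_smul_of_pos_homogeneous hγ ht]
    _ ≤ t * (2 * e) := mul_le_mul_of_nonneg_left hbound ht.le
    _ = 2 * e * t := mul_comm _ _

theorem stmt_19_general {F : Type*} [AddCommGroup F] [Module ℝ F] {m : ℕ}
    (Λ : F →ₗ[ℝ] (Fin m → ℝ))
    (K : Set F) (hK : Convex ℝ K) (h0K : (0 : F) ∈ K)
    (γ : F → ℝ) (hγ : ∀ t : ℝ, 0 ≤ t → ∀ f, γ (t • f) = t * γ f)
    (e : ℝ)
    (hKe : ∀ f' ∈ K, ∀ f'' ∈ K, Λ f' = Λ f'' → γ f' - γ f'' ≤ 2 * e) :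
    ∀ f' f'' : F, Λ f' = Λ f'' →
      gaugeE K f' ≠ ⊤ → gaugeE K f'' ≠ ⊤ →
      γ f' - γ f'' ≤ 2 * e * (max (gaugeE K f') (gaugeE K f'')).toReal := by
  intro f' f'' hΛ h' h''
  set M := (max (gaugeE K f') (gaugeE K f'')).toReal
  have hmax : max (gaugeE K f') (gaugeE K f'') ≠ ⊤ := max_ne_top h' h''
  have hbound : ∀ t, M < t → γ f' - γ f'' ≤ 2 * e * t := fun t hMt ↦ by
    have hlt := (ENNReal.lt_ofReal_iff_toReal_lt hmax).mpr hMt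
    exact sub_le_two_mul_mul_of_gaugeE_lt Λ hK h0K hγ hKe hΛ (ENNReal.toReal_nonneg.trans_lt hMt)
      ((le_max_left _ _).trans_lt hlt) ((le_max_right _ _).trans_lt hlt)
  exact ge_of_tendsto ((continuous_const_mul (2 * e)).tendsto M |>.mono_left nhdsWithin_le_nhds)
    (eventually_nhdsWithin_of_forall (s := Set.Ioi M) hbound)

/-- **Scaling the two-point bound by the Minkowski gauge.** If `γ` is positively
homogeneous and `γ f' − γ f'' ≤ 2e` for all pairs in the convex set `K ∋ 0` with equal
observations, then for arbitrary pairs with equal observations and finite gauges,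
`γ f' − γ f'' ≤ 2e · max(ρ_K f', ρ_K f'')`. -/
theorem stmt_19 {F : Type*} [AddCommGroup F] [Module ℝ F] {m : ℕ}
    (Λ : F →ₗ[ℝ] (Fin m → ℝ))
    (K : Set F) (hK : Convex ℝ K) (h0K : (0 : F) ∈ K)
    (γ : F → ℝ) (hγ : ∀ t : ℝ, 0 ≤ t → ∀ f, γ (t • f) = t * γ f)
    (e : ℝ) (he : 0 ≤ e)
    (hKe : ∀ f' ∈ K, ∀ f'' ∈ K, Λ f' = Λ f'' → γ f' - γ f'' ≤ 2 * e) :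
    ∀ f' f'' : F, Λ f' = Λ f'' →
      gaugeE K f' ≠ ⊤ → gaugeE K f'' ≠ ⊤ →
      γ f' - γ f'' ≤ 2 * e * (max (gaugeE K f') (gaugeE K f'')).toReal :=
  stmt_19_general Λ K hK h0K γ hγ e hKe
end
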